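/- arXiv:math/0106196 — 6 statements merged into one kernel-verified Lean document; each statement's English description precedes it below -/
import Mathlib

section
/- An element λ of the coweight lattice is of minimal length in its coset modulo the coroot lattice if and only if ⟨λ,α⟩ ∈ {0,±1} for every root α. -/
open scoped RealInnerProductSpace

section Helpers
set_option linter.unusedSectionVars false
variable {V : Type*} [NormedAddCommGroup V] [InnerProductSpace ℝ V]

private lemma aux_exists_multiset_sum (C : Set V) (hCneg : ∀ γ ∈ C, -γ ∈ C)
    {β : V} (hβ : β ∈ Submodule.span ℤ C) :
    ∃ s : Multiset V, (∀ γ ∈ s, γ ∈ C) ∧ s.sum = β := by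
  let S : AddSubgroup V :=
    { carrier := {x | ∃ s : Multiset V, (∀ γ ∈ s, γ ∈ C) ∧ s.sum = x}
      zero_mem' := ⟨0, by simp, by simp⟩
      add_mem' := by
        rintro x y ⟨s, hs, rfl⟩ ⟨t, ht, rfl⟩
        refine ⟨s + t, ?_, by simp⟩
        intro γ hγ
        rcases Multiset.mem_add.mp hγ with h | h
        exacts [hs γ h, ht γ h]
      neg_mem' := by
        rintro x ⟨s, hs, rfl⟩
        refine ⟨s.map (fun g => -g), ?_, ?_⟩
        · intro γ hγ
          obtain ⟨g, hg, rfl⟩ := Multiset.mem_map.mp hγ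
          exact hCneg g (hs g hg)
        · simp [Multiset.sum_map_neg'] }
  have hle : Submodule.span ℤ C ≤ AddSubgroup.toIntSubmodule S :=
    Submodule.span_le.mpr fun γ hγ =>
      ⟨{γ}, by intro x hx; rw [Multiset.mem_singleton.mp hx]; exact hγ, by simp⟩
  exact hle hβ

private lemma aux_inner_multiset_sum_nonneg (a : V) (t : Multiset V)
    (h : ∀ b ∈ t, 0 ≤ ⟪a, b⟫) : 0 ≤ ⟪a, t.sum⟫ := by
  induction t using Multiset.induction_on with
  | empty => simp
  | cons b t ih =>
    rw [Multiset.sum_cons, inner_add_right]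
    have h1 := h b (Multiset.mem_cons_self b t)
    have h2 := ih fun c hc => h c (Multiset.mem_cons_of_mem hc)
    linarith

private lemma aux_rootpair (C : Set V)
    (hC0 : ∀ γ ∈ C, γ ≠ 0)
    (hCint : ∀ γ ∈ C, ∀ δ ∈ C, ∃ z : ℤ, 2 * ⟪γ, δ⟫ / ⟪δ, δ⟫ = (z : ℝ))
    (hCrefl : ∀ γ ∈ C, ∀ δ ∈ C, δ - (2 * ⟪δ, γ⟫ / ⟪γ, γ⟫) • γ ∈ C) :
    ∀ γ ∈ C, ∀ δ ∈ C, ⟪γ, δ⟫ < 0 → γ + δ = 0 ∨ γ + δ ∈ C := by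
  intro γ hγ δ hδ hneg
  have hγγ : (0:ℝ) < ⟪γ, γ⟫ := by
    rw [real_inner_self_eq_norm_sq]; exact pow_pos (norm_pos_iff.mpr (hC0 γ hγ)) 2
  have hδδ : (0:ℝ) < ⟪δ, δ⟫ := by
    rw [real_inner_self_eq_norm_sq]; exact pow_pos (norm_pos_iff.mpr (hC0 δ hδ)) 2
  obtain ⟨n, hn⟩ := hCint γ hγ δ hδ
  obtain ⟨m, hm⟩ := hCint δ hδ γ hγ
  have hδγ : ⟪δ, γ⟫ = ⟪γ, δ⟫ := real_inner_comm γ δ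
  have hnneg : (n:ℝ) < 0 := by
    rw [← hn]; exact div_neg_of_neg_of_pos (by linarith) hδδ
  have hmneg : (m:ℝ) < 0 := by
    rw [← hm, hδγ]; exact div_neg_of_neg_of_pos (by linarith) hγγ
  have hnZ : n < 0 := by exact_mod_cast hnneg
  have hmZ : m < 0 := by exact_mod_cast hmneg
  by_cases hm1 : m = -1
  · right
    have h := hCrefl γ hγ δ hδ
    rw [hm, hm1] at h
    have : δ - ((-1:ℤ):ℝ) • γ = γ + δ := by push_cast; module
    rwa [this] at h
  by_cases hn1 : n = -1
  · right
    have h := hCrefl δ hδ γ hγ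
    rw [hn, hn1] at h
    have : γ - ((-1:ℤ):ℝ) • δ = γ + δ := by push_cast; module
    rwa [this] at h
  · have hn2 : n ≤ -2 := by omega
    have hm2 : m ≤ -2 := by omega
    have hcs : ⟪γ, δ⟫ * ⟪γ, δ⟫ ≤ ⟪γ, γ⟫ * ⟪δ, δ⟫ := real_inner_mul_inner_self_le γ δ
    have hprod : (n:ℝ) * m ≤ 4 := by
      rw [← hn, ← hm, hδγ]
      rw [div_mul_div_comm]
      rw [div_le_iff₀ (by positivity)]
      nlinarith
    have hprodZ : n * m ≤ 4 := by exact_mod_cast hprod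
    have hneq : n = -2 := by nlinarith
    have hmeq : m = -2 := by nlinarith
    left
    have e1 : ⟪γ, δ⟫ = -⟪δ, δ⟫ := by
      rw [hneq] at hn; push_cast at hn
      field_simp at hn; linarith
    have e2 : ⟪γ, δ⟫ = -⟪γ, γ⟫ := by
      rw [hmeq] at hm; rw [hδγ] at hm; push_cast at hm
      field_simp at hm; linarith
    have : ⟪γ + δ, γ + δ⟫ = 0 := by
      rw [real_inner_add_add_self]; linarith
    exact inner_self_eq_zero.mp this

private lemma aux_repair [DecidableEq V] (C : Set V)
    (hB : ∀ γ ∈ C, ∀ δ ∈ C, ⟪γ, δ⟫ < 0 → γ + δ = 0 ∨ γ + δ ∈ C) :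
    ∀ n (s : Multiset V), Multiset.card s ≤ n → (∀ γ ∈ s, γ ∈ C) →
      ∃ t : Multiset V, (∀ γ ∈ t, γ ∈ C) ∧
        (∀ a ∈ t, ∀ b ∈ t.erase a, 0 ≤ ⟪a, b⟫) ∧ t.sum = s.sum := by
  intro n
  induction n with
  | zero =>
    intro s hs _
    have : s = 0 := Multiset.card_eq_zero.mp (Nat.le_zero.mp hs)
    subst this
    exact ⟨0, by simp, by simp, rfl⟩
  | succ n ih =>
    intro s hcard hmem
    by_cases hp : ∀ a ∈ s, ∀ b ∈ s.erase a, 0 ≤ ⟪a, b⟫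
    · exact ⟨s, hmem, hp, rfl⟩
    · push_neg at hp
      obtain ⟨a, ha, b, hb, hab⟩ := hp
      set u := (s.erase a).erase b with hu
      have hsa : a ::ₘ s.erase a = s := Multiset.cons_erase ha
      have hsb : b ::ₘ u = s.erase a := Multiset.cons_erase hb
      have hsum : s.sum = a + (b + u.sum) := by
        rw [← hsa, ← hsb]; simp
      have humem : ∀ γ ∈ u, γ ∈ C := fun γ hγ =>
        hmem γ (Multiset.mem_of_mem_erase (Multiset.mem_of_mem_erase hγ))
      have hcu : Multiset.card u + 2 = Multiset.card s := by
        have h1 : Multiset.card (a ::ₘ s.erase a) = Multiset.card s := by rw [hsa]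
        have h2 : Multiset.card (b ::ₘ u) = Multiset.card (s.erase a) := by rw [hsb]
        simp at h1 h2
        omega
      have haC := hmem a ha
      have hbC := hmem b (Multiset.mem_of_mem_erase hb)
      rcases hB a haC b hbC hab with h0 | hC
      · obtain ⟨t, h1, h2, h3⟩ := ih u (by omega) humem
        refine ⟨t, h1, h2, ?_⟩
        rw [h3, hsum, ← add_assoc, h0, zero_add]
      · obtain ⟨t, h1, h2, h3⟩ := ih ((a + b) ::ₘ u)
          (by simp; omega)
          (by intro γ hγ
              rcases Multiset.mem_cons.mp hγ with h | h
              · subst h; exact hC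
              · exact humem γ h)
        refine ⟨t, h1, h2, ?_⟩
        rw [h3, Multiset.sum_cons, hsum, add_assoc]

private lemma aux_good_sum [DecidableEq V] (lam : V) (C : Set V)
    (hlamC : ∀ γ ∈ C, 2 * |⟪lam, γ⟫| ≤ ⟪γ, γ⟫) (t : Multiset V) :
    (∀ γ ∈ t, γ ∈ C) → (∀ a ∈ t, ∀ b ∈ t.erase a, 0 ≤ ⟪a, b⟫) →
      0 ≤ 2 * ⟪lam, t.sum⟫ + ⟪t.sum, t.sum⟫ := by
  induction t using Multiset.induction_on with
  | empty => simp
  | cons a t ih =>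
    intro hmem hpair
    have haC := hmem a (Multiset.mem_cons_self a t)
    have hat : ∀ b ∈ t, 0 ≤ ⟪a, b⟫ := by
      intro b hb
      have h := hpair a (Multiset.mem_cons_self a t)
      rw [Multiset.erase_cons_head] at h
      exact h b hb
    have htpair : ∀ b ∈ t, ∀ c ∈ t.erase b, 0 ≤ ⟪b, c⟫ := by
      intro b hb c hc
      exact hpair b (Multiset.mem_cons_of_mem hb) c
        (Multiset.mem_of_le (Multiset.erase_le_erase b (Multiset.le_cons_self t a)) hc)
    have ih' := ih (fun γ hγ => hmem γ (Multiset.mem_cons_of_mem hγ)) htpair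
    have hTa : 0 ≤ ⟪a, Multiset.sum t⟫ := aux_inner_multiset_sum_nonneg a t hat
    have h1 : -⟪a, a⟫ ≤ 2 * ⟪lam, a⟫ := by
      have := hlamC a haC
      have h3 := neg_abs_le ⟪lam, a⟫
      linarith
    rw [Multiset.sum_cons, inner_add_right, real_inner_add_add_self]
    linarith

end Helpers

/-- An element λ of the coweight lattice is of minimal length in its coset
modulo the coroot lattice if and only if `⟨λ,α⟩ ∈ {0, ±1}` for every root α. -/
theorem minimal_length_iff_inner_le_one
    {V : Type*} [NormedAddCommGroup V] [InnerProductSpace ℝ V]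
    (R : Finset V)
    (h0 : (0 : V) ∉ R)
    (hspan : Submodule.span ℝ (R : Set V) = ⊤)
    (hneg : ∀ α ∈ R, -α ∈ R)
    (hint : ∀ α ∈ R, ∀ β ∈ R, ∃ z : ℤ, 2 * ⟪α, β⟫ / ⟪α, α⟫ = (z : ℝ))
    (hrefl : ∀ α ∈ R, ∀ β ∈ R, β - (2 * ⟪β, α⟫ / ⟪α, α⟫) • α ∈ R)
    (hirr : ∀ R₁ R₂ : Set V, (R : Set V) = R₁ ∪ R₂ →
      (∀ α ∈ R₁, ∀ β ∈ R₂, ⟪α, β⟫ = 0) → R₁ = ∅ ∨ R₂ = ∅)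
    (θ : V) (hθR : θ ∈ R) (hθ2 : ⟪θ, θ⟫ = 2)
    (hlong : ∀ α ∈ R, ⟪α, α⟫ ≤ ⟪θ, θ⟫)
    (lam : V) (hlam : ∀ α ∈ R, ∃ z : ℤ, ⟪lam, α⟫ = (z : ℝ)) :
    (∀ β ∈ Submodule.span ℤ ((fun α => (2 / ⟪α, α⟫) • α) '' (R : Set V)),
        ‖lam‖ ≤ ‖lam + β‖) ↔
      ∀ α ∈ R, ⟪lam, α⟫ ∈ ({0, 1, -1} : Set ℝ) := by
  classical
  set C : Set V := (fun α => (2 / ⟪α, α⟫) • α) '' (R : Set V) with hCdef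
  have hRpos : ∀ α ∈ R, (0:ℝ) < ⟪α, α⟫ := by
    intro α hα
    have hα0 : α ≠ 0 := fun h => h0 (h ▸ hα)
    rw [real_inner_self_eq_norm_sq]; exact pow_pos (norm_pos_iff.mpr hα0) 2
  constructor
  · -- minimal ⟹ small pairings
    intro hmin α hα
    obtain ⟨z, hz⟩ := hlam α hα
    have key : ∀ β' ∈ R, ⟪lam, β'⟫ ≤ 1 := by
      intro β' hβ'
      have hb := hRpos β' hβ'
      have hmem : -((2 / ⟪β', β'⟫) • β') ∈ Submodule.span ℤ C :=
        Submodule.neg_mem _ (Submodule.subset_span ⟨β', by simpa using hβ', rfl⟩)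
      have h1 := hmin _ hmem
      have h2 : ‖lam‖ ^ 2 ≤ ‖lam + -((2 / ⟪β', β'⟫) • β')‖ ^ 2 :=
        pow_le_pow_left₀ (norm_nonneg _) h1 2
      rw [norm_add_sq_real] at h2
      have h3 : ⟪lam, -((2 / ⟪β', β'⟫) • β')⟫ = -(2 / ⟪β', β'⟫ * ⟪lam, β'⟫) := by
        rw [inner_neg_right, real_inner_smul_right]
      have h4 : ‖-((2 / ⟪β', β'⟫) • β')‖ ^ 2 = 4 / ⟪β', β'⟫ := by
        rw [← real_inner_self_eq_norm_sq, inner_neg_neg, real_inner_smul_left,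
          real_inner_smul_right]
        field_simp
        ring
      rw [h3, h4] at h2
      have h6 : 0 ≤ 4 / ⟪β', β'⟫ * (1 - ⟪lam, β'⟫) := by
        ring_nf at h2 ⊢
        linarith
      by_contra hx
      push_neg at hx
      have : 4 / ⟪β', β'⟫ * (1 - ⟪lam, β'⟫) < 0 :=
        mul_neg_of_pos_of_neg (by positivity) (by linarith)
      linarith
    have k1 : ⟪lam, α⟫ ≤ 1 := key α hα
    have k2 : -⟪lam, α⟫ ≤ 1 := by
      have := key (-α) (hneg α hα)
      rwa [inner_neg_right] at this
    have hz1 : z ≤ 1 := by exact_mod_cast hz ▸ k1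
    have hz2 : -1 ≤ z := by
      have : (-1:ℝ) ≤ (z:ℝ) := by rw [← hz]; linarith
      exact_mod_cast this
    rw [hz]
    interval_cases z
    · right; right; norm_num
    · left; norm_num
    · right; left; norm_num
  · -- small pairings ⟹ minimal
    intro hsmall β hβ
    have hC0 : ∀ γ ∈ C, γ ≠ 0 := by
      rintro γ ⟨α, hα, rfl⟩ hzero
      simp only [Finset.mem_coe] at hα
      have ha := hRpos α hα
      have h2 : (2 / ⟪α, α⟫) ≠ 0 := by positivity
      have : α = 0 := (smul_eq_zero.mp hzero).resolve_left h2
      exact h0 (this ▸ hα)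
    have hCneg : ∀ γ ∈ C, -γ ∈ C := by
      rintro γ ⟨α, hα, rfl⟩
      simp only [Finset.mem_coe] at hα
      refine ⟨-α, by simpa using hneg α hα, ?_⟩
      show (2 / ⟪-α, -α⟫) • (-α) = -((2 / ⟪α, α⟫) • α)
      rw [inner_neg_neg, smul_neg]
    have hCint : ∀ γ ∈ C, ∀ δ ∈ C, ∃ z : ℤ, 2 * ⟪γ, δ⟫ / ⟪δ, δ⟫ = (z : ℝ) := by
      rintro γ ⟨α, hα, rfl⟩ δ ⟨α', hα', rfl⟩
      simp only [Finset.mem_coe] at hα hα'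
      obtain ⟨z, hz⟩ := hint α hα α' hα'
      have ha := hRpos α hα
      have hb := hRpos α' hα'
      refine ⟨z, ?_⟩
      rw [← hz]
      simp only [real_inner_smul_left, real_inner_smul_right]
      field_simp
    have hCrefl : ∀ γ ∈ C, ∀ δ ∈ C, δ - (2 * ⟪δ, γ⟫ / ⟪γ, γ⟫) • γ ∈ C := by
      rintro γ ⟨α, hα, rfl⟩ δ ⟨α', hα', rfl⟩
      simp only [Finset.mem_coe] at hα hα'
      have ha := hRpos α hα
      have hb := hRpos α' hα'
      set σ := α' - (2 * ⟪α', α⟫ / ⟪α, α⟫) • α with hσdef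
      have hσR : σ ∈ R := hrefl α hα α' hα'
      have hσσ : ⟪σ, σ⟫ = ⟪α', α'⟫ := by
        rw [hσdef, real_inner_sub_sub_self, real_inner_smul_right, real_inner_smul_left,
          real_inner_smul_right, real_inner_comm α α']
        field_simp
        ring
      refine ⟨σ, by simpa using hσR, ?_⟩
      show (2 / ⟪σ, σ⟫) • σ = _
      rw [hσσ, hσdef]
      simp only [real_inner_smul_left, real_inner_smul_right, smul_sub, smul_smul]
      match_scalars
      · field_simp
      · field_simp
    have hlamC : ∀ γ ∈ C, 2 * |⟪lam, γ⟫| ≤ ⟪γ, γ⟫ := by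
      rintro γ ⟨α, hα, rfl⟩
      simp only [Finset.mem_coe] at hα
      have ha := hRpos α hα
      have hx : |⟪lam, α⟫| ≤ 1 := by
        rcases hsmall α hα with h | h | h <;> rw [h] <;> norm_num
      have h2a : (0:ℝ) < 2 / ⟪α, α⟫ := by positivity
      rw [real_inner_smul_right, real_inner_smul_left, real_inner_smul_right, abs_mul,
        abs_of_pos h2a]
      have e : 2 / ⟪α, α⟫ * (2 / ⟪α, α⟫ * ⟪α, α⟫) = 2 * (2 / ⟪α, α⟫) := by
        field_simp
      rw [e]
      nlinarith
    have hB := aux_rootpair C hC0 hCint hCrefl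
    obtain ⟨s, hsC, hssum⟩ := aux_exists_multiset_sum C hCneg hβ
    obtain ⟨t, htC, htpair, htsum⟩ := aux_repair C hB (Multiset.card s) s le_rfl hsC
    have hineq := aux_good_sum lam C hlamC t htC htpair
    rw [htsum, hssum] at hineq
    have h2 : ‖lam‖ ^ 2 ≤ ‖lam + β‖ ^ 2 := by
      rw [norm_add_sq_real]
      have : ⟪β, β⟫ = ‖β‖ ^ 2 := real_inner_self_eq_norm_sq β
      linarith [hineq, this ▸ hineq]
    nlinarith [norm_nonneg lam, norm_nonneg (lam + β), h2]
end

section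
/- In each coset of the coweight lattice modulo the coroot lattice, there is exactly one Weyl group orbit consisting of the elements of minimal length; in particular, any two minimal elements of the same coset lie in the same Weyl orbit. -/
open scoped RealInnerProductSpace

variable {V : Type*} [NormedAddCommGroup V] [InnerProductSpace ℝ V]

/-- The coroot lattice `Q∨`, the ℤ-span of the coroots `α∨ = (2/⟨α,α⟩) • α`. -/
def corootLattice (R : Finset V) : Submodule ℤ V :=
  Submodule.span ℤ ((fun α => (2 / ⟪α, α⟫) • α) '' (R : Set V))

/-- Membership in the coweight lattice `P∨`: integral pairing with all roots. -/
def IsCoweight (R : Finset V) (v : V) : Prop :=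
  ∀ α ∈ R, ∃ z : ℤ, ⟪v, α⟫ = (z : ℝ)

/-- `v` has minimal length in its coset modulo the coroot lattice. -/
def IsMinimalLength (R : Finset V) (v : V) : Prop :=
  ∀ β ∈ corootLattice R, ‖v‖ ≤ ‖v + β‖

/-- The Weyl group: the subgroup of linear isometries generated by the
reflections in the roots. -/
def weylGroup (R : Finset V) : Subgroup (V ≃ₗᵢ[ℝ] V) :=
  Subgroup.closure {w | ∃ α ∈ R, ∀ v, w v = v - (2 * ⟪v, α⟫ / ⟪α, α⟫) • α}

namespace UMWO
variable {R : Finset V}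

lemma inner_self_pos_of_mem (h0 : (0:V) ∉ R) {α : V} (hα : α ∈ R) : 0 < ⟪α, α⟫ := by
  have hα0 : α ≠ 0 := fun h => h0 (h ▸ hα)
  rw [real_inner_self_eq_norm_sq]
  have : 0 < ‖α‖ := norm_pos_iff.2 hα0
  positivity

lemma eq_of_inner_eq (hspan : Submodule.span ℝ (R : Set V) = ⊤) {v w : V}
    (h : ∀ α ∈ R, ⟪v, α⟫ = ⟪w, α⟫) : v = w := by
  have hvw : ∀ x ∈ Submodule.span ℝ (R : Set V), ⟪v - w, x⟫ = 0 := by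
    intro x hx
    induction hx using Submodule.span_induction with
    | mem x hx => rw [inner_sub_left, h x hx, sub_self]
    | zero => simp
    | add x y _ _ hx hy => rw [inner_add_right, hx, hy, add_zero]
    | smul a x _ hx => rw [real_inner_smul_right, hx, mul_zero]
  have : ⟪v - w, v - w⟫ = 0 := hvw _ (by rw [hspan]; trivial)
  rw [inner_self_eq_zero, sub_eq_zero] at this
  exact this

/-- coweights form a ℤ-submodule -/
lemma cw_zero : IsCoweight R 0 := fun α _ => ⟨0, by simp⟩

lemma cw_add {v w : V} (hv : IsCoweight R v) (hw : IsCoweight R w) :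
    IsCoweight R (v + w) := by
  intro α hα
  obtain ⟨z₁, hz₁⟩ := hv α hα; obtain ⟨z₂, hz₂⟩ := hw α hα
  exact ⟨z₁ + z₂, by rw [inner_add_left, hz₁, hz₂]; push_cast; ring⟩

lemma cw_neg {v : V} (hv : IsCoweight R v) : IsCoweight R (-v) := by
  intro α hα
  obtain ⟨z, hz⟩ := hv α hα
  exact ⟨-z, by rw [inner_neg_left, hz]; push_cast; ring⟩

lemma cw_zsmul {v : V} (hv : IsCoweight R v) (z : ℤ) : IsCoweight R (z • v) := by
  intro α hα
  obtain ⟨z₁, hz₁⟩ := hv α hα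
  refine ⟨z * z₁, ?_⟩
  rw [← Int.cast_smul_eq_zsmul ℝ, real_inner_smul_left, hz₁]
  push_cast; ring

lemma cw_sub {v w : V} (hv : IsCoweight R v) (hw : IsCoweight R w) :
    IsCoweight R (v - w) := by
  rw [sub_eq_add_neg]; exact cw_add hv (cw_neg hw)

lemma isCoweight_coroot (hint : ∀ α ∈ R, ∀ β ∈ R, ∃ z : ℤ, 2 * ⟪α, β⟫ / ⟪α, α⟫ = (z : ℝ))
    {α : V} (hα : α ∈ R) : IsCoweight R ((2 / ⟪α, α⟫) • α) := by
  intro β hβ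
  obtain ⟨z, hz⟩ := hint α hα β hβ
  exact ⟨z, by rw [real_inner_smul_left, ← hz]; ring⟩

lemma isCoweight_of_mem_corootLattice
    (hint : ∀ α ∈ R, ∀ β ∈ R, ∃ z : ℤ, 2 * ⟪α, β⟫ / ⟪α, α⟫ = (z : ℝ))
    {v : V} (hv : v ∈ corootLattice R) : IsCoweight R v := by
  induction hv using Submodule.span_induction with
  | mem x hx => obtain ⟨α, hα, rfl⟩ := hx; exact isCoweight_coroot hint hα
  | zero => exact cw_zero
  | add x y _ _ hx hy => exact cw_add hx hy
  | smul a x _ hx => exact cw_zsmul hx a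

/-- finiteness of coweights in a ball -/
lemma coweight_ball_finite (hspan : Submodule.span ℝ (R : Set V) = ⊤) (r : ℝ) :
    {v : V | IsCoweight R v ∧ ‖v‖ ≤ r}.Finite := by
  classical
  set S := {v : V | IsCoweight R v ∧ ‖v‖ ≤ r} with hS
  set f : V → (R → ℝ) := fun v α => ⟪v, (α : V)⟫ with hf
  have hinj : Set.InjOn f S := by
    intro v hv w hw hvw
    refine eq_of_inner_eq hspan (fun α hα => ?_)
    exact congrFun hvw ⟨α, hα⟩
  have himage : (f '' S).Finite := by
    have hK : ∀ α : R, {x : ℝ | ∃ z : ℤ, x = (z : ℝ) ∧ |x| ≤ r * ‖(α : V)‖}.Finite := by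
      intro α
      set N : ℤ := ⌈r * ‖(α : V)‖⌉ with hN
      have : {x : ℝ | ∃ z : ℤ, x = (z : ℝ) ∧ |x| ≤ r * ‖(α : V)‖} ⊆
          (fun z : ℤ => (z : ℝ)) '' (Set.Icc (-N) N) := by
        rintro x ⟨z, rfl, hz⟩
        refine ⟨z, ?_, rfl⟩
        have h1 : ((|z| : ℤ) : ℝ) ≤ (N : ℝ) := by
          rw [Int.cast_abs]
          exact le_trans hz (Int.le_ceil _)
        have h2 : |z| ≤ N := by exact_mod_cast h1
        rw [Set.mem_Icc]
        constructor
        · linarith [neg_abs_le z]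
        · linarith [le_abs_self z]
      exact Set.Finite.subset (Set.Finite.image _ (Set.finite_Icc _ _)) this
    refine Set.Finite.subset (Set.Finite.pi' hK) ?_
    rintro _ ⟨v, ⟨hcw, hnorm⟩, rfl⟩
    intro α
    obtain ⟨z, hz⟩ := hcw α α.2
    refine ⟨z, hz, ?_⟩
    calc |⟪v, (α:V)⟫| ≤ ‖v‖ * ‖(α:V)‖ := abs_real_inner_le_norm _ _
    _ ≤ r * ‖(α:V)‖ := by
        exact mul_le_mul_of_nonneg_right hnorm (norm_nonneg _)
  exact Set.Finite.of_finite_image himage hinj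

/-- the reflection in a vector, as a linear map -/
noncomputable def sLin (α : V) : V →ₗ[ℝ] V where
  toFun v := v - (2 * ⟪v, α⟫ / ⟪α, α⟫) • α
  map_add' v w := by
    simp only [inner_add_left, mul_add, add_div, add_smul]
    abel
  map_smul' c v := by
    simp only [real_inner_smul_left, RingHom.id_apply, smul_sub, smul_smul]
    congr 2
    ring

lemma sLin_apply (α v : V) : sLin α v = v - (2 * ⟪v, α⟫ / ⟪α, α⟫) • α := rfl

lemma sLin_invol (α : V) : Function.Involutive (sLin α) := by
  intro v
  by_cases hs : ⟪α, α⟫ = 0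
  · simp [sLin_apply, inner_self_eq_zero.1 hs]
  · have h1 : ⟪sLin α v, α⟫ = -⟪v, α⟫ := by
      simp only [sLin_apply, inner_sub_left, real_inner_smul_left]
      field_simp
      ring
    rw [sLin_apply, h1, sLin_apply]
    have : 2 * -⟪v, α⟫ / ⟪α, α⟫ = -(2 * ⟪v, α⟫ / ⟪α, α⟫) := by ring
    rw [this, neg_smul]
    abel

lemma sLin_inner (α v : V) : ⟪sLin α v, sLin α v⟫ = ⟪v, v⟫ := by
  by_cases hs : ⟪α, α⟫ = 0
  · simp [sLin_apply, inner_self_eq_zero.1 hs]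
  · simp only [sLin_apply, inner_sub_left, inner_sub_right, real_inner_smul_left,
      real_inner_smul_right]
    have hc : ⟪α, v⟫ = ⟪v, α⟫ := real_inner_comm _ _
    rw [hc]
    field_simp
    ring

/-- the reflection in a vector, as a linear isometry equivalence -/
noncomputable def refl (α : V) : V ≃ₗᵢ[ℝ] V :=
  { LinearEquiv.ofInvolutive (sLin α) (sLin_invol α) with
    norm_map' := by
      intro v
      have h := sLin_inner α v
      rw [real_inner_self_eq_norm_sq, real_inner_self_eq_norm_sq] at h
      have h1 : ‖sLin α v‖ = ‖v‖ := by
        nlinarith [norm_nonneg (sLin α v), norm_nonneg v]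
      simpa using h1 }

lemma refl_apply (α v : V) : refl α v = v - (2 * ⟪v, α⟫ / ⟪α, α⟫) • α := rfl

lemma refl_mem_weylGroup {R : Finset V} {α : V} (hα : α ∈ R) : refl α ∈ weylGroup R :=
  Subgroup.subset_closure ⟨α, hα, fun v => rfl⟩


/-- The key invariant property of Weyl group elements. -/
def Phi (R : Finset V) (w : V ≃ₗᵢ[ℝ] V) : Prop :=
  ∀ v, IsCoweight R v → IsCoweight R (w v) ∧ w v - v ∈ corootLattice R

lemma phi_congr {w w' : V ≃ₗᵢ[ℝ] V} (h : ∀ v, w v = w' v) (hw : Phi R w) : Phi R w' := by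
  intro v hv
  rw [← h v]
  exact hw v hv

lemma phi_one : Phi R (1 : V ≃ₗᵢ[ℝ] V) := by
  intro v hv
  refine ⟨by simpa using hv, by simp⟩

lemma phi_mul (hint : ∀ α ∈ R, ∀ β ∈ R, ∃ z : ℤ, 2 * ⟪α, β⟫ / ⟪α, α⟫ = (z : ℝ))
    {x y : V ≃ₗᵢ[ℝ] V} (hx : Phi R x) (hy : Phi R y) : Phi R (x * y) := by
  intro v hv
  have h1 := hy v hv
  have h2 := hx (y v) h1.1
  have happ : (x * y) v = x (y v) := rfl
  rw [happ]
  refine ⟨h2.1, ?_⟩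
  have : x (y v) - v = (x (y v) - y v) + (y v - v) := by abel
  rw [this]
  exact add_mem h2.2 h1.2

lemma phi_gen (h0 : (0:V) ∉ R)
    (hint : ∀ α ∈ R, ∀ β ∈ R, ∃ z : ℤ, 2 * ⟪α, β⟫ / ⟪α, α⟫ = (z : ℝ))
    {g : V ≃ₗᵢ[ℝ] V} {α : V} (hα : α ∈ R)
    (hg : ∀ v, g v = v - (2 * ⟪v, α⟫ / ⟪α, α⟫) • α) : Phi R g := by
  intro v hv
  constructor
  · intro β hβ
    obtain ⟨z₀, hz₀⟩ := hv β hβ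
    obtain ⟨z₁, hz₁⟩ := hv α hα
    obtain ⟨z₂, hz₂⟩ := hint α hα β hβ
    refine ⟨z₀ - z₁ * z₂, ?_⟩
    rw [hg v, inner_sub_left, real_inner_smul_left, hz₀]
    have : 2 * ⟪v, α⟫ / ⟪α, α⟫ * ⟪α, β⟫ = ⟪v, α⟫ * (2 * ⟪α, β⟫ / ⟪α, α⟫) := by ring
    rw [this, hz₁, hz₂]
    push_cast; ring
  · obtain ⟨z₁, hz₁⟩ := hv α hα
    have key : g v - v = (-z₁ : ℤ) • ((2 / ⟪α, α⟫) • α) := by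
      rw [hg v, ← Int.cast_smul_eq_zsmul ℝ, smul_smul, hz₁]
      have h2 : ((-z₁ : ℤ) : ℝ) * (2 / ⟪α, α⟫) = -(2 * (z₁ : ℝ) / ⟪α, α⟫) := by
        push_cast; ring
      rw [h2, neg_smul]
      abel
    rw [key]
    exact Submodule.smul_mem _ _ (Submodule.subset_span ⟨α, hα, rfl⟩)

lemma gen_invol {g : V ≃ₗᵢ[ℝ] V} {α : V}
    (hg : ∀ v, g v = v - (2 * ⟪v, α⟫ / ⟪α, α⟫) • α) (v : V) : g (g v) = v := by
  rw [hg, hg]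
  exact sLin_invol α v

lemma gen_inv_eq {g : V ≃ₗᵢ[ℝ] V} {α : V}
    (hg : ∀ v, g v = v - (2 * ⟪v, α⟫ / ⟪α, α⟫) • α) (v : V) : g⁻¹ v = g v := by
  have h := gen_invol hg v
  calc g⁻¹ v = g.symm v := rfl
  _ = g.symm (g (g v)) := by rw [h]
  _ = g v := g.symm_apply_apply _

lemma phi_all (h0 : (0:V) ∉ R)
    (hint : ∀ α ∈ R, ∀ β ∈ R, ∃ z : ℤ, 2 * ⟪α, β⟫ / ⟪α, α⟫ = (z : ℝ))
    {w : V ≃ₗᵢ[ℝ] V} (hw : w ∈ weylGroup R) : Phi R w ∧ Phi R w⁻¹ := by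
  induction hw using Subgroup.closure_induction with
  | mem g hg =>
    obtain ⟨α, hα, hgα⟩ := hg
    have h1 := phi_gen h0 hint hα hgα
    exact ⟨h1, phi_congr (fun v => (gen_inv_eq hgα v).symm) h1⟩
  | one => exact ⟨phi_one, by rw [inv_one]; exact phi_one⟩
  | mul x y hx hy ihx ihy =>
    refine ⟨phi_mul hint ihx.1 ihy.1, ?_⟩
    rw [mul_inv_rev]
    exact phi_mul hint ihy.2 ihx.2
  | inv x hx ih => exact ⟨ih.2, by rw [inv_inv]; exact ih.1⟩

lemma weyl_coweight (h0 : (0:V) ∉ R)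
    (hint : ∀ α ∈ R, ∀ β ∈ R, ∃ z : ℤ, 2 * ⟪α, β⟫ / ⟪α, α⟫ = (z : ℝ))
    {w : V ≃ₗᵢ[ℝ] V} (hw : w ∈ weylGroup R) {v : V} (hv : IsCoweight R v) :
    IsCoweight R (w v) := ((phi_all h0 hint hw).1 v hv).1

lemma weyl_coset (h0 : (0:V) ∉ R)
    (hint : ∀ α ∈ R, ∀ β ∈ R, ∃ z : ℤ, 2 * ⟪α, β⟫ / ⟪α, α⟫ = (z : ℝ))
    {w : V ≃ₗᵢ[ℝ] V} (hw : w ∈ weylGroup R) {v : V} (hv : IsCoweight R v) :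
    w v - v ∈ corootLattice R := ((phi_all h0 hint hw).1 v hv).2

lemma weyl_lattice (h0 : (0:V) ∉ R)
    (hint : ∀ α ∈ R, ∀ β ∈ R, ∃ z : ℤ, 2 * ⟪α, β⟫ / ⟪α, α⟫ = (z : ℝ))
    {w : V ≃ₗᵢ[ℝ] V} (hw : w ∈ weylGroup R) {b : V} (hb : b ∈ corootLattice R) :
    w b ∈ corootLattice R := by
  have hbw := isCoweight_of_mem_corootLattice hint hb
  have h := weyl_coset h0 hint hw hbw
  have : w b = (w b - b) + b := by abel
  rw [this]
  exact add_mem h hb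

lemma weyl_min (h0 : (0:V) ∉ R)
    (hint : ∀ α ∈ R, ∀ β ∈ R, ∃ z : ℤ, 2 * ⟪α, β⟫ / ⟪α, α⟫ = (z : ℝ))
    {w : V ≃ₗᵢ[ℝ] V} (hw : w ∈ weylGroup R) {v : V}
    (hmin : IsMinimalLength R v) : IsMinimalLength R (w v) := by
  intro β hβ
  have hβ' : w.symm β ∈ corootLattice R := by
    have : w⁻¹ β ∈ corootLattice R := weyl_lattice h0 hint (inv_mem hw) hβ
    exact this
  have key : w v + β = w (v + w.symm β) := by
    rw [map_add, w.apply_symm_apply]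
  rw [key, w.norm_map, w.norm_map]
  exact hmin _ hβ'

lemma exists_regular (s : Finset V) (hs : ∀ α ∈ s, α ≠ 0) :
    ∃ t : V, ∀ α ∈ s, ⟪t, α⟫ ≠ 0 := by
  classical
  induction s using Finset.induction_on with
  | empty => exact ⟨0, by simp⟩
  | @insert α s hαs ih =>
    obtain ⟨t, ht⟩ := ih (fun β hβ => hs β (Finset.mem_insert_of_mem hβ))
    have hα0 : α ≠ 0 := hs α (Finset.mem_insert_self _ _)
    have hαα : ⟪α, α⟫ ≠ 0 := by
      rw [real_inner_self_eq_norm_sq]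
      have : 0 < ‖α‖ := norm_pos_iff.2 hα0
      positivity
    set B : Finset ℝ := insert (0 : ℝ) ((insert α s).image (fun β => -⟪t, β⟫ / ⟪α, β⟫)) with hB
    obtain ⟨ε, hε⟩ := Infinite.exists_notMem_finset B
    have hε0 : ε ≠ 0 := fun h => hε (h ▸ Finset.mem_insert_self _ _)
    refine ⟨t + ε • α, ?_⟩
    intro β hβ
    rw [inner_add_left, real_inner_smul_left]
    by_cases hab : ⟪α, β⟫ = 0
    · have hβs : β ∈ s := by
        rcases Finset.mem_insert.1 hβ with h | h
        · exact absurd (h ▸ hab) hαα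
        · exact h
      rw [hab, mul_zero, add_zero]
      exact ht β hβs
    · intro hcon
      apply hε
      refine Finset.mem_insert_of_mem ?_
      refine Finset.mem_image.2 ⟨β, hβ, ?_⟩
      field_simp
      linarith [hcon]

lemma exists_dominant (h0 : (0:V) ∉ R) (hspan : Submodule.span ℝ (R : Set V) = ⊤)
    (hint : ∀ α ∈ R, ∀ β ∈ R, ∃ z : ℤ, 2 * ⟪α, β⟫ / ⟪α, α⟫ = (z : ℝ))
    {t : V} (ht : ∀ α ∈ R, ⟪t, α⟫ ≠ 0) {lam : V} (hlam : IsCoweight R lam) :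
    ∃ w ∈ weylGroup R, ∀ α ∈ R, 0 < ⟪t, α⟫ → 0 ≤ ⟪w lam, α⟫ := by
  classical
  set T : Set V := {v | ∃ w ∈ weylGroup R, w lam = v} with hT
  have hTsub : T ⊆ {v : V | IsCoweight R v ∧ ‖v‖ ≤ ‖lam‖} := by
    rintro v ⟨w, hw, rfl⟩
    exact ⟨weyl_coweight h0 hint hw hlam, le_of_eq (w.norm_map lam)⟩
  have hTfin : T.Finite := Set.Finite.subset (coweight_ball_finite hspan ‖lam‖) hTsub
  have hTne : T.Nonempty := ⟨lam, 1, one_mem _, rfl⟩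
  obtain ⟨v, hvT, hvmax⟩ := Set.exists_max_image T (fun v => ⟪t, v⟫) hTfin hTne
  obtain ⟨w, hw, hwv⟩ := hvT
  refine ⟨w, hw, ?_⟩
  rw [hwv]
  intro α hα htα
  by_contra hneg
  push_neg at hneg
  set v' : V := refl α v with hv'
  have hv'T : v' ∈ T := ⟨refl α * w, mul_mem (refl_mem_weylGroup hα) hw, by
    have : (refl α * w) lam = refl α (w lam) := rfl
    rw [this, hwv]⟩
  have hlt : ⟪t, v⟫ < ⟪t, v'⟫ := by
    rw [hv', refl_apply, inner_sub_right, real_inner_smul_right]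
    have hs : 0 < ⟪α, α⟫ := inner_self_pos_of_mem h0 hα
    have hcoef : 2 * ⟪v, α⟫ / ⟪α, α⟫ < 0 := by
      apply div_neg_of_neg_of_pos _ hs
      linarith
    nlinarith [htα]
  exact absurd (hvmax v' hv'T) (not_le.2 hlt)

lemma exists_min_in_coset (hspan : Submodule.span ℝ (R : Set V) = ⊤)
    (hint : ∀ α ∈ R, ∀ β ∈ R, ∃ z : ℤ, 2 * ⟪α, β⟫ / ⟪α, α⟫ = (z : ℝ))
    {lam : V} (hlam : IsCoweight R lam) :
    ∃ μ, IsCoweight R μ ∧ lam - μ ∈ corootLattice R ∧ IsMinimalLength R μ := by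
  classical
  set S : Set V := {v | IsCoweight R v ∧ ‖v‖ ≤ ‖lam‖ ∧ lam - v ∈ corootLattice R} with hS
  have hSfin : S.Finite := by
    apply Set.Finite.subset (coweight_ball_finite hspan ‖lam‖)
    rintro v ⟨h1, h2, _⟩
    exact ⟨h1, h2⟩
  have hSne : S.Nonempty := ⟨lam, hlam, le_refl _, by rw [sub_self]; exact zero_mem _⟩
  obtain ⟨μ, hμS, hμmin⟩ := Set.exists_min_image S (fun v => ‖v‖) hSfin hSne
  obtain ⟨hμcw, hμnorm, hμcoset⟩ := hμS
  refine ⟨μ, hμcw, hμcoset, ?_⟩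
  intro β hβ
  by_contra hcon
  push_neg at hcon
  have hμβ : μ + β ∈ S := by
    refine ⟨cw_add hμcw (isCoweight_of_mem_corootLattice hint hβ), ?_, ?_⟩
    · exact le_trans (le_of_lt hcon) hμnorm
    · have : lam - (μ + β) = (lam - μ) - β := by abel
      rw [this]
      exact sub_mem hμcoset hβ
  exact absurd (hμmin _ hμβ) (not_le.2 hcon)

/-! ### The coroot set and a base of simple coroots -/

noncomputable section

def Cset (R : Finset V) : Set V := (fun α => (2 / ⟪α, α⟫) • α) '' (R : Set V)

def Cpos (R : Finset V) (t : V) : Set V := {c | c ∈ Cset R ∧ 0 < ⟪t, c⟫}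

def Dset (R : Finset V) (t : V) : Set V :=
  {c | c ∈ Cpos R t ∧ ¬ ∃ a ∈ Cpos R t, ∃ b ∈ Cpos R t, c = a + b}

lemma corootLattice_eq_span : corootLattice R = Submodule.span ℤ (Cset R) := rfl

lemma cset_finite : (Cset R).Finite := Set.Finite.image _ (R.finite_toSet)

lemma cset_inner_self_pos (h0 : (0:V) ∉ R) {c : V} (hc : c ∈ Cset R) : 0 < ⟪c, c⟫ := by
  obtain ⟨α, hα, rfl⟩ := hc
  have hs := inner_self_pos_of_mem h0 hα
  rw [real_inner_smul_left, real_inner_smul_right]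
  have h2 : 0 < 2 / ⟪α, α⟫ := by positivity
  positivity

lemma cset_neg (hneg : ∀ α ∈ R, -α ∈ R) {c : V} (hc : c ∈ Cset R) : -c ∈ Cset R := by
  obtain ⟨α, hα, rfl⟩ := hc
  refine ⟨-α, hneg α hα, ?_⟩
  dsimp only
  rw [inner_neg_neg, smul_neg]

lemma cset_reg (h0 : (0:V) ∉ R) {t : V} (ht : ∀ α ∈ R, ⟪t, α⟫ ≠ 0) {c : V}
    (hc : c ∈ Cset R) : ⟪t, c⟫ ≠ 0 := by
  obtain ⟨α, hα, rfl⟩ := hc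
  rw [real_inner_smul_right]
  have hs := inner_self_pos_of_mem h0 hα
  have h2 : 2 / ⟪α, α⟫ ≠ 0 := by positivity
  exact mul_ne_zero h2 (ht α hα)

lemma cint (h0 : (0:V) ∉ R)
    (hint : ∀ α ∈ R, ∀ β ∈ R, ∃ z : ℤ, 2 * ⟪α, β⟫ / ⟪α, α⟫ = (z : ℝ))
    {c d : V} (hc : c ∈ Cset R) (hd : d ∈ Cset R) :
    ∃ z : ℤ, 2 * ⟪c, d⟫ / ⟪c, c⟫ = (z : ℝ) := by
  obtain ⟨α, hα, rfl⟩ := hc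
  obtain ⟨β, hβ, rfl⟩ := hd
  obtain ⟨z, hz⟩ := hint β hβ α hα
  refine ⟨z, ?_⟩
  rw [← hz]
  have hsα := inner_self_pos_of_mem h0 hα
  have hsβ := inner_self_pos_of_mem h0 hβ
  rw [real_inner_smul_left, real_inner_smul_right, real_inner_smul_left, real_inner_smul_right,
    real_inner_comm β α]
  field_simp

lemma cclosed (h0 : (0:V) ∉ R)
    (hrefl : ∀ α ∈ R, ∀ β ∈ R, β - (2 * ⟪β, α⟫ / ⟪α, α⟫) • α ∈ R)
    {c d : V} (hc : c ∈ Cset R) (hd : d ∈ Cset R) :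
    c - (2 * ⟪c, d⟫ / ⟪d, d⟫) • d ∈ Cset R := by
  obtain ⟨α, hα, rfl⟩ := hc
  obtain ⟨β, hβ, rfl⟩ := hd
  have hsα := inner_self_pos_of_mem h0 hα
  have hsβ := inner_self_pos_of_mem h0 hβ
  set γ : V := α - (2 * ⟪α, β⟫ / ⟪β, β⟫) • β with hγ
  have hγR : γ ∈ R := hrefl β hβ α hα
  have hγγ : ⟪γ, γ⟫ = ⟪α, α⟫ := sLin_inner β α
  refine ⟨γ, hγR, ?_⟩
  dsimp only
  rw [hγγ, hγ, smul_sub, smul_smul]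
  congr 1
  rw [smul_smul]
  congr 1
  rw [real_inner_smul_left, real_inner_smul_right, real_inner_smul_left, real_inner_smul_right]
  field_simp

lemma key_lemma (h0 : (0:V) ∉ R) (hneg : ∀ α ∈ R, -α ∈ R)
    (hint : ∀ α ∈ R, ∀ β ∈ R, ∃ z : ℤ, 2 * ⟪α, β⟫ / ⟪α, α⟫ = (z : ℝ))
    (hrefl : ∀ α ∈ R, ∀ β ∈ R, β - (2 * ⟪β, α⟫ / ⟪α, α⟫) • α ∈ R)
    {c d : V} (hc : c ∈ Cset R) (hd : d ∈ Cset R)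
    (hcd : 0 < ⟪c, d⟫) (hne : c ≠ d) : c - d ∈ Cset R := by
  have hcc := cset_inner_self_pos h0 hc
  have hdd := cset_inner_self_pos h0 hd
  obtain ⟨p, hp⟩ := cint h0 hint hd hc
  obtain ⟨q, hq⟩ := cint h0 hint hc hd
  rw [real_inner_comm c d] at hp
  have hp1 : 1 ≤ p := by
    have : (0:ℝ) < p := by rw [← hp]; positivity
    exact_mod_cast this
  have hq1 : 1 ≤ q := by
    have : (0:ℝ) < q := by rw [← hq]; positivity
    exact_mod_cast this
  by_cases hpe : p = 1
  · have := cclosed h0 hrefl hc hd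
    rw [hp, hpe] at this
    simpa using this
  by_cases hqe : q = 1
  · have h2 := cclosed h0 hrefl hd hc
    rw [real_inner_comm c d, hq, hqe] at h2
    simp only [Int.cast_one, one_smul] at h2
    have h3 := cset_neg hneg h2
    rw [neg_sub] at h3
    exact h3
  · exfalso
    have hp2 : 2 ≤ p := by omega
    have hq2 : 2 ≤ q := by omega
    have hCS := real_inner_mul_inner_self_le c d
    have hprod : (p:ℝ) * q * (⟪d, d⟫ * ⟪c, c⟫) = 4 * (⟪c, d⟫ * ⟪c, d⟫) := by
      rw [← hp, ← hq]
      field_simp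
      ring
    have hpq4 : (p:ℝ) * q ≤ 4 := by
      nlinarith [mul_pos hdd hcc]
    have hpq4' : p * q ≤ 4 := by exact_mod_cast hpq4
    have hpe2 : p = 2 := by nlinarith
    have hqe2 : q = 2 := by nlinarith
    have hcd1 : ⟪c, d⟫ = ⟪d, d⟫ := by
      rw [hpe2] at hp
      have : (2:ℝ) * ⟪c, d⟫ = 2 * ⟪d, d⟫ := by
        field_simp at hp
        push_cast at hp
        linarith
      linarith
    have hcd2 : ⟪c, d⟫ = ⟪c, c⟫ := by
      rw [hqe2] at hq
      have : (2:ℝ) * ⟪c, d⟫ = 2 * ⟪c, c⟫ := by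
        field_simp at hq
        push_cast at hq
        linarith
      linarith
    have hzero : ⟪c - d, c - d⟫ = 0 := by
      rw [inner_sub_left, inner_sub_right, inner_sub_right, real_inner_comm c d]
      linarith
    rw [inner_self_eq_zero, sub_eq_zero] at hzero
    exact hne hzero

lemma cpos_finite {t : V} : (Cpos R t).Finite :=
  Set.Finite.subset cset_finite (fun _ h => h.1)

lemma gen_aux {t : V} : ∀ n : ℕ, ∀ c ∈ Cpos R t,
    {d | d ∈ Cpos R t ∧ ⟪t, d⟫ < ⟪t, c⟫}.ncard ≤ n →
    c ∈ AddSubmonoid.closure (Dset R t) := by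
  intro n
  induction n using Nat.strong_induction_on with
  | _ n ih =>
    intro c hc hcard
    by_cases hD : c ∈ Dset R t
    · exact AddSubmonoid.subset_closure hD
    · have hdec : ∃ a ∈ Cpos R t, ∃ b ∈ Cpos R t, c = a + b := by
        by_contra hcon
        exact hD ⟨hc, hcon⟩
      obtain ⟨a, ha, b, hb, rfl⟩ := hdec
      have htab : ⟪t, a + b⟫ = ⟪t, a⟫ + ⟪t, b⟫ := inner_add_right _ _ _
      have hta : ⟪t, a⟫ < ⟪t, a + b⟫ := by rw [htab]; linarith [hb.2]
      have htb : ⟪t, b⟫ < ⟪t, a + b⟫ := by rw [htab]; linarith [ha.2]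
      have hfin : {d | d ∈ Cpos R t ∧ ⟪t, d⟫ < ⟪t, a + b⟫}.Finite :=
        Set.Finite.subset cpos_finite (fun _ h => h.1)
      have step : ∀ x, x ∈ Cpos R t → ⟪t, x⟫ < ⟪t, a + b⟫ →
          x ∈ AddSubmonoid.closure (Dset R t) := by
        intro x hx htx
        have hsub : {d | d ∈ Cpos R t ∧ ⟪t, d⟫ < ⟪t, x⟫} ⊂
            {d | d ∈ Cpos R t ∧ ⟪t, d⟫ < ⟪t, a + b⟫} := by
          rw [Set.ssubset_iff_subset_ne]
          constructor
          · rintro d ⟨hd1, hd2⟩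
            exact ⟨hd1, lt_trans hd2 htx⟩
          · intro heq
            have hxmem : x ∈ {d | d ∈ Cpos R t ∧ ⟪t, d⟫ < ⟪t, a + b⟫} := ⟨hx, htx⟩
            rw [← heq] at hxmem
            exact lt_irrefl _ hxmem.2
        have hlt : {d | d ∈ Cpos R t ∧ ⟪t, d⟫ < ⟪t, x⟫}.ncard <
            {d | d ∈ Cpos R t ∧ ⟪t, d⟫ < ⟪t, a + b⟫}.ncard :=
          Set.ncard_lt_ncard hsub hfin
        exact ih _ (lt_of_lt_of_le hlt hcard) x hx le_rfl
      exact add_mem (step a ha hta) (step b hb htb)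

lemma gen_closure {t : V} {c : V} (hc : c ∈ Cpos R t) :
    c ∈ AddSubmonoid.closure (Dset R t) :=
  gen_aux _ c hc le_rfl

lemma obtuse (h0 : (0:V) ∉ R) (hneg : ∀ α ∈ R, -α ∈ R)
    (hint : ∀ α ∈ R, ∀ β ∈ R, ∃ z : ℤ, 2 * ⟪α, β⟫ / ⟪α, α⟫ = (z : ℝ))
    (hrefl : ∀ α ∈ R, ∀ β ∈ R, β - (2 * ⟪β, α⟫ / ⟪α, α⟫) • α ∈ R)
    {t : V} (ht : ∀ α ∈ R, ⟪t, α⟫ ≠ 0)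
    {c d : V} (hc : c ∈ Dset R t) (hd : d ∈ Dset R t) (hne : c ≠ d) : ⟪c, d⟫ ≤ 0 := by
  by_contra hcon
  push_neg at hcon
  have he : c - d ∈ Cset R := key_lemma h0 hneg hint hrefl hc.1.1 hd.1.1 hcon hne
  have hte : ⟪t, c - d⟫ ≠ 0 := cset_reg h0 ht he
  rcases lt_or_gt_of_ne hte with hlt | hgt
  · have hne' : -(c - d) ∈ Cpos R t := by
      refine ⟨cset_neg hneg he, ?_⟩
      rw [inner_neg_right]
      linarith
    exact hd.2 ⟨c, hc.1, -(c - d), hne', by abel⟩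
  · have he' : c - d ∈ Cpos R t := ⟨he, hgt⟩
    exact hc.2 ⟨d, hd.1, c - d, he', by abel⟩

lemma lattice_le_spanD (h0 : (0:V) ∉ R) (hneg : ∀ α ∈ R, -α ∈ R)
    {t : V} (ht : ∀ α ∈ R, ⟪t, α⟫ ≠ 0) :
    corootLattice R ≤ Submodule.span ℤ (Dset R t) := by
  rw [corootLattice_eq_span]
  rw [Submodule.span_le]
  intro c hc
  have hmem : ∀ x ∈ AddSubmonoid.closure (Dset R t), x ∈ Submodule.span ℤ (Dset R t) := by
    intro x hx
    have : AddSubmonoid.closure (Dset R t) ≤ (Submodule.span ℤ (Dset R t)).toAddSubmonoid :=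
      AddSubmonoid.closure_le.2 (fun y hy => Submodule.subset_span hy)
    exact this hx
  rcases lt_or_gt_of_ne (cset_reg h0 ht hc) with hlt | hgt
  · have : -c ∈ Cpos R t := by
      refine ⟨cset_neg hneg hc, ?_⟩
      rw [inner_neg_right]; linarith
    have h2 := hmem _ (gen_closure this)
    have h3 := Submodule.neg_mem _ h2
    rw [neg_neg] at h3
    exact h3
  · exact hmem _ (gen_closure ⟨hc, hgt⟩)

lemma min_half {v β : V} (hmin : IsMinimalLength R v) (hβ : β ∈ corootLattice R) :
    ⟪v, β⟫ ≤ ⟪β, β⟫ / 2 := by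
  have h := hmin (-β) (neg_mem hβ)
  have h2 : v + -β = v - β := by abel
  rw [h2] at h
  have h3 : ‖v‖ ^ 2 ≤ ‖v - β‖ ^ 2 := pow_le_pow_left₀ (norm_nonneg _) h 2
  rw [norm_sub_sq_real] at h3
  rw [real_inner_self_eq_norm_sq]
  linarith

lemma dominant_unique (h0 : (0:V) ∉ R) (hneg : ∀ α ∈ R, -α ∈ R)
    (hint : ∀ α ∈ R, ∀ β ∈ R, ∃ z : ℤ, 2 * ⟪α, β⟫ / ⟪α, α⟫ = (z : ℝ))
    (hrefl : ∀ α ∈ R, ∀ β ∈ R, β - (2 * ⟪β, α⟫ / ⟪α, α⟫) • α ∈ R)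
    {t : V} (ht : ∀ α ∈ R, ⟪t, α⟫ ≠ 0) {lam mu : V}
    (hdl : ∀ c ∈ Cpos R t, 0 ≤ ⟪lam, c⟫) (hdm : ∀ c ∈ Cpos R t, 0 ≤ ⟪mu, c⟫)
    (hsub : lam - mu ∈ corootLattice R)
    (hm1 : IsMinimalLength R lam) (hm2 : IsMinimalLength R mu) : lam = mu := by
  classical
  have hνD : lam - mu ∈ Submodule.span ℤ (Dset R t) := lattice_le_spanD h0 hneg ht hsub
  obtain ⟨f, hfsupp, hfsum⟩ := Submodule.mem_span_set.1 hνD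
  set P : Finset V := f.support.filter (fun d => 0 < f d) with hP
  set N : Finset V := f.support \ P with hN
  set νp : V := ∑ d ∈ P, ((f d : ℝ)) • d with hνp
  set νn : V := ∑ d ∈ N, ((-(f d) : ℝ)) • d with hνn
  -- basic membership facts
  have hPD : ∀ d ∈ P, d ∈ Dset R t := fun d hd => hfsupp (Finset.mem_of_mem_filter d hd)
  have hND : ∀ d ∈ N, d ∈ Dset R t := fun d hd => hfsupp (Finset.mem_sdiff.1 hd).1
  have hPpos : ∀ d ∈ P, 0 < f d := fun d hd => (Finset.mem_filter.1 hd).2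
  have hNneg : ∀ d ∈ N, f d < 0 := by
    intro d hd
    obtain ⟨hd1, hd2⟩ := Finset.mem_sdiff.1 hd
    have h1 : f d ≠ 0 := Finsupp.mem_support_iff.1 hd1
    have h2 : ¬ 0 < f d := fun h => hd2 (Finset.mem_filter.2 ⟨hd1, h⟩)
    omega
  -- the split
  have hsplit : νp - νn = lam - mu := by
    rw [← hfsum, Finsupp.sum]
    have h1 : ∀ d ∈ f.support, f d • d = ((f d : ℝ)) • d := by
      intro d _
      rw [Int.cast_smul_eq_zsmul]
    rw [Finset.sum_congr rfl h1]
    have h2 : f.support = P ∪ N := by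
      rw [hN, Finset.union_sdiff_of_subset (Finset.filter_subset _ _)]
    rw [h2, Finset.sum_union (Finset.disjoint_sdiff)]
    rw [hνp, hνn]
    have h3 : ∑ d ∈ N, ((-(f d) : ℝ)) • d = -∑ d ∈ N, ((f d : ℝ)) • d := by
      rw [← Finset.sum_neg_distrib]
      congr 1
      ext d
      push_cast
      rw [neg_smul]
    rw [h3]
    abel
  -- lattice membership
  have hmemD : ∀ d ∈ Dset R t, d ∈ corootLattice R := by
    intro d hd
    rw [corootLattice_eq_span]
    exact Submodule.subset_span hd.1.1
  have hνpQ : νp ∈ corootLattice R := by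
    refine Submodule.sum_mem _ (fun d hd => ?_)
    rw [Int.cast_smul_eq_zsmul]
    exact Submodule.smul_mem _ _ (hmemD d (hPD d hd))
  have hνnQ : νn ∈ corootLattice R := by
    refine Submodule.sum_mem _ (fun d hd => ?_)
    have : ((-(f d) : ℝ)) • d = (-(f d)) • d := by
      rw [← Int.cast_neg, Int.cast_smul_eq_zsmul]
    rw [this]
    exact Submodule.smul_mem _ _ (hmemD d (hND d hd))
  -- cross term nonpositive
  have hcross : ⟪νp, νn⟫ ≤ 0 := by
    rw [hνp, hνn, sum_inner]
    refine Finset.sum_nonpos (fun c hc => ?_)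
    rw [real_inner_smul_left, inner_sum]
    rw [Finset.mul_sum]
    refine Finset.sum_nonpos (fun d hd => ?_)
    rw [real_inner_smul_right]
    have hcne : c ≠ d := by
      intro h
      subst h
      exact absurd (hPpos c hc) (not_lt.2 (le_of_lt (hNneg c hd)))
    have hob : ⟪c, d⟫ ≤ 0 := obtuse h0 hneg hint hrefl ht (hPD c hc) (hND d hd) hcne
    have h1 : (0:ℝ) ≤ (f c : ℝ) := le_of_lt (by exact_mod_cast hPpos c hc)
    have h2 : (0:ℝ) ≤ ((-(f d)) : ℝ) := by
      have := hNneg d hd; push_cast; linarith [(show ((f d):ℝ) < 0 by exact_mod_cast this)]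
    have h3 : (-(f d : ℝ)) * ⟪c, d⟫ ≤ 0 := mul_nonpos_iff.2 (Or.inl ⟨h2, hob⟩)
    exact mul_nonpos_iff.2 (Or.inl ⟨h1, h3⟩)
  -- dominance terms
  have hdomp : ∀ x : V, (∀ c ∈ Cpos R t, 0 ≤ ⟪x, c⟫) → 0 ≤ ⟪x, νp⟫ := by
    intro x hx
    rw [hνp, inner_sum]
    refine Finset.sum_nonneg (fun d hd => ?_)
    rw [real_inner_smul_right]
    have h1 : (0:ℝ) ≤ (f d : ℝ) := le_of_lt (by exact_mod_cast hPpos d hd)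
    exact mul_nonneg h1 (hx d (hPD d hd).1)
  have hdomn : ∀ x : V, (∀ c ∈ Cpos R t, 0 ≤ ⟪x, c⟫) → 0 ≤ ⟪x, νn⟫ := by
    intro x hx
    rw [hνn, inner_sum]
    refine Finset.sum_nonneg (fun d hd => ?_)
    rw [real_inner_smul_right]
    have h2 : (0:ℝ) ≤ ((-(f d)) : ℝ) := by
      have := hNneg d hd
      have : ((f d):ℝ) < 0 := by exact_mod_cast this
      push_cast
      linarith
    exact mul_nonneg h2 (hx d (hND d hd).1)
  -- νp = 0
  have hνp0 : νp = 0 := by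
    have e1 : ⟪νp, νp⟫ = ⟪νp, lam - mu⟫ + ⟪νp, νn⟫ := by
      rw [← inner_add_right]
      congr 1
      rw [← hsplit]; abel
    have e2 : ⟪νp, lam - mu⟫ = ⟪νp, lam⟫ - ⟪νp, mu⟫ := inner_sub_right _ _ _
    have e3 : 0 ≤ ⟪mu, νp⟫ := hdomp mu hdm
    have e4 : ⟪lam, νp⟫ ≤ ⟪νp, νp⟫ / 2 := min_half hm1 hνpQ
    have e5 : ⟪νp, mu⟫ = ⟪mu, νp⟫ := real_inner_comm _ _
    have e6 : ⟪νp, lam⟫ = ⟪lam, νp⟫ := real_inner_comm _ _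
    have e7 : 0 ≤ ⟪νp, νp⟫ := real_inner_self_nonneg
    have : ⟪νp, νp⟫ ≤ 0 := by linarith
    have h0' : ⟪νp, νp⟫ = 0 := le_antisymm this e7
    rwa [inner_self_eq_zero] at h0'
  -- νn = 0
  have hνn0 : νn = 0 := by
    have e1 : ⟪νn, νn⟫ = ⟪νn, νp⟫ - ⟪νn, lam - mu⟫ := by
      rw [← inner_sub_right]
      congr 1
      rw [← hsplit]; abel
    have e2 : ⟪νn, lam - mu⟫ = ⟪νn, lam⟫ - ⟪νn, mu⟫ := inner_sub_right _ _ _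
    have e3 : 0 ≤ ⟪lam, νn⟫ := hdomn lam hdl
    have e4 : ⟪mu, νn⟫ ≤ ⟪νn, νn⟫ / 2 := min_half hm2 hνnQ
    have e5 : ⟪νn, νp⟫ = ⟪νp, νn⟫ := real_inner_comm _ _
    have e6 : ⟪νn, lam⟫ = ⟪lam, νn⟫ := real_inner_comm _ _
    have e6' : ⟪νn, mu⟫ = ⟪mu, νn⟫ := real_inner_comm _ _
    have e7 : 0 ≤ ⟪νn, νn⟫ := real_inner_self_nonneg
    have : ⟪νn, νn⟫ ≤ 0 := by linarith
    have h0' : ⟪νn, νn⟫ = 0 := le_antisymm this e7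
    rwa [inner_self_eq_zero] at h0'
  have : lam - mu = 0 := by rw [← hsplit, hνp0, hνn0, sub_zero]
  rw [sub_eq_zero] at this
  exact this

end

end UMWO

/-- In each coset of the coweight lattice modulo the coroot lattice there
is exactly one Weyl group orbit consisting of the elements of minimal length; in
particular, any two minimal elements of the same coset lie in the same Weyl orbit. -/
theorem unique_minimal_weyl_orbit
    (R : Finset V)
    (h0 : (0 : V) ∉ R)
    (hspan : Submodule.span ℝ (R : Set V) = ⊤)
    (hneg : ∀ α ∈ R, -α ∈ R)
    (hint : ∀ α ∈ R, ∀ β ∈ R, ∃ z : ℤ, 2 * ⟪α, β⟫ / ⟪α, α⟫ = (z : ℝ))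
    (hrefl : ∀ α ∈ R, ∀ β ∈ R, β - (2 * ⟪β, α⟫ / ⟪α, α⟫) • α ∈ R)
    (hirr : ∀ R₁ R₂ : Set V, (R : Set V) = R₁ ∪ R₂ →
      (∀ α ∈ R₁, ∀ β ∈ R₂, ⟪α, β⟫ = 0) → R₁ = ∅ ∨ R₂ = ∅)
    (θ : V) (hθR : θ ∈ R) (hθ2 : ⟪θ, θ⟫ = 2)
    (hlong : ∀ α ∈ R, ⟪α, α⟫ ≤ ⟪θ, θ⟫)
    :
    (∀ lam, IsCoweight R lam →
      ∃ μ, IsCoweight R μ ∧ lam - μ ∈ corootLattice R ∧ IsMinimalLength R μ) ∧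
    (∀ lam μ, IsCoweight R lam → IsCoweight R μ → lam - μ ∈ corootLattice R →
      IsMinimalLength R lam → IsMinimalLength R μ →
      ∃ w ∈ weylGroup R, w lam = μ) := by
  constructor
  · intro lam hlam
    exact UMWO.exists_min_in_coset hspan hint hlam
  · intro lam mu hlam hmu hsub hminl hminm
    obtain ⟨t, ht⟩ := UMWO.exists_regular R (fun α hα h => h0 (h ▸ hα))
    obtain ⟨w₁, hw₁, hdom₁⟩ := UMWO.exists_dominant h0 hspan hint ht hlam
    obtain ⟨w₂, hw₂, hdom₂⟩ := UMWO.exists_dominant h0 hspan hint ht hmu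
    have hCpos : ∀ (x : V), (∀ α ∈ R, 0 < ⟪t, α⟫ → 0 ≤ ⟪x, α⟫) →
        ∀ c ∈ UMWO.Cpos R t, 0 ≤ ⟪x, c⟫ := by
      rintro x hx c ⟨⟨α, hα, rfl⟩, hpos⟩
      have hs := UMWO.inner_self_pos_of_mem h0 hα
      have h2 : 0 < (2:ℝ) / ⟪α, α⟫ := by positivity
      rw [real_inner_smul_right] at hpos ⊢
      have htα : 0 < ⟪t, α⟫ := by
        by_contra hcon
        push_neg at hcon
        nlinarith
      exact mul_nonneg (le_of_lt h2) (hx α hα htα)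
    have hd1 : ∀ c ∈ UMWO.Cpos R t, 0 ≤ ⟪w₁ lam, c⟫ := hCpos _ hdom₁
    have hd2 : ∀ c ∈ UMWO.Cpos R t, 0 ≤ ⟪w₂ mu, c⟫ := hCpos _ hdom₂
    have hmin1 : IsMinimalLength R (w₁ lam) := UMWO.weyl_min h0 hint hw₁ hminl
    have hmin2 : IsMinimalLength R (w₂ mu) := UMWO.weyl_min h0 hint hw₂ hminm
    have hsub' : w₁ lam - w₂ mu ∈ corootLattice R := by
      have h1 : w₁ lam - lam ∈ corootLattice R := UMWO.weyl_coset h0 hint hw₁ hlam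
      have h2 : w₂ mu - mu ∈ corootLattice R := UMWO.weyl_coset h0 hint hw₂ hmu
      have : w₁ lam - w₂ mu = (w₁ lam - lam) + (lam - mu) - (w₂ mu - mu) := by abel
      rw [this]
      exact sub_mem (add_mem h1 hsub) h2
    have heq : w₁ lam = w₂ mu :=
      UMWO.dominant_unique h0 hneg hint hrefl ht hd1 hd2 hsub' hmin1 hmin2
    refine ⟨w₂⁻¹ * w₁, mul_mem (inv_mem hw₂) hw₁, ?_⟩
    have happ : (w₂⁻¹ * w₁) lam = w₂.symm (w₁ lam) := rfl
    rw [happ, heq]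
    exact w₂.symm_apply_apply mu
end

section
/- Let α_i, α_j be special simple roots with associated elements w_i, w_j ∈ W_0 and fundamental coweights λ_i∨, λ_j∨. If w_i w_j = 1 then w_i λ_j∨ = −λ_i∨, hence λ_j∨ ≡ −λ_i∨ mod Q∨; if w_i w_j = w_k for a special root α_k, then w_i λ_j∨ = λ_k∨ − λ_i∨, hence λ_i∨ + λ_j∨ ≡ λ_k∨ mod Q∨. -/
open scoped RealInnerProductSpace

variable {V : Type*} [NormedAddCommGroup V] [InnerProductSpace ℝ V]

/-!
Since `w_i` permutes the extended simple roots and sends `-θ` to `α_i`, the pairing of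
`w_i λ_j∨` with a simple root `α_l` is the pairing of `λ_j∨` with `w_i⁻¹ α_l`. For `l = i`
this is `⟨λ_j∨, -θ⟩ = -m_j = -1`; otherwise `w_i⁻¹ α_l` is a simple root, and the pairing is
`1` exactly when `α_l = w_i α_j`. As `w_i α_j = w_i w_j (-θ)`, this is `-θ` when `w_i w_j = 1`
and `α_k` when `w_i w_j = w_k`, giving `w_i λ_j∨ = -λ_i∨` resp. `λ_k∨ - λ_i∨`.
The congruences hold because a reflection `s_α` moves `v` by `⟨v, α⟩ α∨`, so every Weyl group
element moves a vector pairing integrally with all roots by an element of `Q∨`.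
-/

open Set Function

section WeylGroup

variable {R : Finset V}

theorem map_mem_corootLattice {w : V ≃ₗᵢ[ℝ] V} (hw : MapsTo w R R) {x : V}
    (hx : x ∈ corootLattice R) : w x ∈ corootLattice R := by
  induction hx using Submodule.span_induction with
  | mem y hy =>
    obtain ⟨α, hα, rfl⟩ := hy
    have hcoroot : w ((2 / ⟪α, α⟫) • α) = (2 / ⟪w α, w α⟫) • w α := by
      rw [map_smul, w.inner_map_map]
    exact hcoroot ▸ Submodule.subset_span ⟨w α, hw hα, rfl⟩
  | zero => simp
  | add x y _ _ hx hy => rw [map_add]; exact add_mem hx hy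
  | smul c x _ hx => rw [map_zsmul]; exact Submodule.smul_mem _ c hx

theorem mapsTo_of_mem_weylGroup
    (hrefl : ∀ α ∈ R, ∀ β ∈ R, β - (2 * ⟪β, α⟫ / ⟪α, α⟫) • α ∈ R)
    {w : V ≃ₗᵢ[ℝ] V} (hw : w ∈ weylGroup R) : MapsTo w R R := by
  induction hw using Subgroup.closure_induction with
  | mem s hs =>
    obtain ⟨α, hα, hsα⟩ := hs
    intro β hβ
    rw [hsα]
    exact hrefl α hα β hβ
  | one => exact mapsTo_id _
  | mul x y _ _ hx hy => simpa [LinearIsometryEquiv.coe_mul] using hx.comp hy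
  | inv x _ hx =>
    obtain ⟨-, -, hsurj⟩ :=
      (R.finite_toSet.injOn_iff_bijOn_of_mapsTo hx).mp x.injective.injOn
    intro α hα
    obtain ⟨β, hβ, rfl⟩ := hsurj hα
    simpa [LinearIsometryEquiv.coe_inv] using hβ

theorem sub_reflection_eq (v α : V) :
    v - (v - (2 * ⟪v, α⟫ / ⟪α, α⟫) • α) = ⟪v, α⟫ • (2 / ⟪α, α⟫) • α := by
  rw [sub_sub_cancel, smul_smul, mul_div_assoc', mul_comm]

theorem sub_apply_mem_corootLattice
    (hrefl : ∀ α ∈ R, ∀ β ∈ R, β - (2 * ⟪β, α⟫ / ⟪α, α⟫) • α ∈ R)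
    {w : V ≃ₗᵢ[ℝ] V} (hw : w ∈ weylGroup R) {v : V}
    (hv : ∀ α ∈ R, ∃ z : ℤ, ⟪v, α⟫ = z) : v - w v ∈ corootLattice R := by
  induction hw using Subgroup.closure_induction with
  | mem s hs =>
    obtain ⟨α, hα, hsα⟩ := hs
    obtain ⟨z, hz⟩ := hv α hα
    rw [hsα, sub_reflection_eq, hz, Int.cast_smul_eq_zsmul]
    exact Submodule.smul_mem _ z (Submodule.subset_span ⟨α, hα, rfl⟩)
  | one => simp
  | mul x y hxW _ hx hy =>
    have hsplit : v - (x * y) v = (v - x v) + x (v - y v) := by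
      simp only [LinearIsometryEquiv.coe_mul, comp_apply, map_sub]
      abel
    rw [hsplit]
    exact add_mem hx (map_mem_corootLattice (mapsTo_of_mem_weylGroup hrefl hxW) hy)
  | inv x hxW hx =>
    have hsplit : v - x⁻¹ v = x⁻¹ (-(v - x v)) := by
      simp [LinearIsometryEquiv.coe_inv]
    rw [hsplit]
    exact map_mem_corootLattice (mapsTo_of_mem_weylGroup hrefl (inv_mem hxW)) (neg_mem hx)

end WeylGroup

section Coweights

variable {ι : Type*} {Δ ϖ : ι → V}

theorem span_range_eq_top_of_span_eq_top {R : Set V} (hspan : Submodule.span ℝ R = ⊤)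
    (hbase : ∀ α ∈ R, α ∈ AddSubmonoid.closure (range Δ) ∨
      -α ∈ AddSubmonoid.closure (range Δ)) :
    Submodule.span ℝ (range Δ) = ⊤ := by
  rw [eq_top_iff, ← hspan, Submodule.span_le]
  intro α hα
  rcases hbase α hα with h | h
  · exact Submodule.closure_subset_span h
  · simpa using neg_mem (Submodule.closure_subset_span (R := ℝ) h)

theorem exists_int_inner_of_mem_closure {v : V} {s : Set V}
    (hs : ∀ x ∈ s, ∃ z : ℤ, ⟪v, x⟫ = z) {x : V} (hx : x ∈ AddSubmonoid.closure s) :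
    ∃ z : ℤ, ⟪v, x⟫ = z := by
  induction hx using AddSubmonoid.closure_induction with
  | mem y hy => exact hs y hy
  | zero => exact ⟨0, by simp⟩
  | add x y _ _ hx hy =>
    obtain ⟨a, ha⟩ := hx
    obtain ⟨b, hb⟩ := hy
    exact ⟨a + b, by rw [inner_add_right, ha, hb, Int.cast_add]⟩

theorem exists_int_coweight_inner [DecidableEq ι] {R : Set V}
    (hbase : ∀ α ∈ R, α ∈ AddSubmonoid.closure (range Δ) ∨
      -α ∈ AddSubmonoid.closure (range Δ))
    (hϖ : ∀ i j, ⟪ϖ i, Δ j⟫ = if i = j then 1 else 0) (p : ι) :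
    ∀ α ∈ R, ∃ z : ℤ, ⟪ϖ p, α⟫ = z := by
  have hsimple : ∀ x ∈ range Δ, ∃ z : ℤ, ⟪ϖ p, x⟫ = z := by
    rintro _ ⟨l, rfl⟩
    exact ⟨if p = l then 1 else 0, by rw [hϖ]; split_ifs <;> simp⟩
  intro α hα
  rcases hbase α hα with h | h
  · exact exists_int_inner_of_mem_closure hsimple h
  · obtain ⟨z, hz⟩ := exists_int_inner_of_mem_closure hsimple h
    exact ⟨-z, by rw [inner_neg_right] at hz; push_cast; linarith⟩

theorem eq_of_forall_simple_inner_eq (hΔind : LinearIndependent ℝ Δ)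
    (hΔspan : Submodule.span ℝ (range Δ) = ⊤) {x y : V}
    (h : ∀ l, ⟪Δ l, x⟫ = ⟪Δ l, y⟫) : x = y :=
  InnerProductSpace.ext_inner_left_basis (Module.Basis.mk hΔind hΔspan.ge) (by simpa using h)

theorem coweight_inner_sum_smul [Fintype ι] [DecidableEq ι]
    (hϖ : ∀ i j, ⟪ϖ i, Δ j⟫ = if i = j then 1 else 0)
    (c : ι → ℝ) (q : ι) : ⟪ϖ q, ∑ i, c i • Δ i⟫ = c q := by
  simp [inner_sum, real_inner_smul_right, hϖ]

theorem ne_neg_sum_smul [Fintype ι] (hΔind : LinearIndependent ℝ Δ) {c : ι → ℝ}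
    (hc : ∀ i, 0 ≤ c i) (l : ι) : Δ l ≠ -∑ i, c i • Δ i := by
  classical
  intro h
  have hzero : ∑ i, (c i + if i = l then 1 else 0) • Δ i = 0 := by
    simp [add_smul, Finset.sum_add_distrib, ite_smul, h]
  have hcoeff := Fintype.linearIndependent_iff.mp hΔind _ hzero l
  rw [if_pos rfl] at hcoeff
  linarith [hc l]

variable {θ : V} {w : V ≃ₗᵢ[ℝ] V} {p q : ι}

theorem simple_inner_apply_coweight_eq_zero [DecidableEq ι] (hΔinj : Injective Δ)
    (hϖ : ∀ i j, ⟪ϖ i, Δ j⟫ = if i = j then 1 else 0)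
    (hstab : (fun v => w v) '' insert (-θ) (range Δ) = insert (-θ) (range Δ))
    (hwθ : w (-θ) = Δ p) {l : ι} (hlp : l ≠ p) (hwq : w (Δ q) ≠ Δ l) :
    ⟪Δ l, w (ϖ q)⟫ = 0 := by
  have hmem : Δ l ∈ (fun v => w v) '' insert (-θ) (range Δ) := by
    rw [hstab]
    exact mem_insert_of_mem _ ⟨l, rfl⟩
  obtain ⟨x, hx, hxl⟩ := hmem
  rcases hx with rfl | ⟨l', rfl⟩
  · exact absurd (hΔinj (hxl.symm.trans hwθ)) hlp
  · have hql' : q ≠ l' := by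
      rintro rfl
      exact hwq hxl
    rw [← hxl, w.inner_map_map, real_inner_comm, hϖ, if_neg hql']

theorem apply_coweight_of_apply_simple_eq_neg [DecidableEq ι] (hΔind : LinearIndependent ℝ Δ)
    (hΔspan : Submodule.span ℝ (range Δ) = ⊤)
    (hϖ : ∀ i j, ⟪ϖ i, Δ j⟫ = if i = j then 1 else 0) (hθΔ : ∀ l, Δ l ≠ -θ)
    (hstab : (fun v => w v) '' insert (-θ) (range Δ) = insert (-θ) (range Δ))
    (hwθ : w (-θ) = Δ p) (hwq : w (Δ q) = -θ) :
    w (ϖ q) = -⟪ϖ q, θ⟫ • ϖ p := by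
  refine eq_of_forall_simple_inner_eq hΔind hΔspan fun l => ?_
  rw [real_inner_smul_right, real_inner_comm (ϖ p), hϖ]
  rcases eq_or_ne l p with rfl | hlp
  · rw [← hwθ, w.inner_map_map, inner_neg_left, real_inner_comm]
    simp
  · rw [if_neg hlp.symm, mul_zero,
      simple_inner_apply_coweight_eq_zero hΔind.injective hϖ hstab hwθ hlp (hwq ▸ (hθΔ l).symm)]

theorem apply_coweight_of_apply_simple_eq [DecidableEq ι] (hΔind : LinearIndependent ℝ Δ)
    (hΔspan : Submodule.span ℝ (range Δ) = ⊤)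
    (hϖ : ∀ i j, ⟪ϖ i, Δ j⟫ = if i = j then 1 else 0) (hθΔ : ∀ l, Δ l ≠ -θ)
    (hstab : (fun v => w v) '' insert (-θ) (range Δ) = insert (-θ) (range Δ))
    (hwθ : w (-θ) = Δ p) {k : ι} (hwq : w (Δ q) = Δ k) :
    w (ϖ q) = ϖ k - ⟪ϖ q, θ⟫ • ϖ p := by
  have hkp : k ≠ p := by
    rintro rfl
    exact hθΔ q (w.injective (hwq.trans hwθ.symm))
  refine eq_of_forall_simple_inner_eq hΔind hΔspan fun l => ?_
  rw [inner_sub_right, real_inner_smul_right, real_inner_comm (ϖ k), real_inner_comm (ϖ p),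
    hϖ, hϖ]
  rcases eq_or_ne l p with rfl | hlp
  · rw [← hwθ, w.inner_map_map, inner_neg_left, real_inner_comm, if_neg hkp]
    simp
  · rw [if_neg hlp.symm, mul_zero, sub_zero]
    rcases eq_or_ne k l with rfl | hkl
    · rw [if_pos rfl, ← hwq, w.inner_map_map, real_inner_comm, hϖ, if_pos rfl]
    · rw [if_neg hkl, simple_inner_apply_coweight_eq_zero hΔind.injective hϖ hstab hwθ hlp
        (hwq ▸ hΔind.injective.ne hkl)]

end Coweights

theorem special_weyl_composition_general
    (R : Finset V)
    (hspan : Submodule.span ℝ (R : Set V) = ⊤)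
    (hrefl : ∀ α ∈ R, ∀ β ∈ R, β - (2 * ⟪β, α⟫ / ⟪α, α⟫) • α ∈ R)
    (θ : V)
    {n : ℕ} (Δ : Fin n → V)
    (hΔind : LinearIndependent ℝ Δ)
    (hbase : ∀ α ∈ R, α ∈ AddSubmonoid.closure (Set.range Δ) ∨
      -α ∈ AddSubmonoid.closure (Set.range Δ))
    (m : Fin n → ℕ)
    (hθsum : θ = ∑ i, (m i : ℝ) • Δ i)
    (ϖ : Fin n → V)
    (hϖ : ∀ i j, ⟪ϖ i, Δ j⟫ = if i = j then 1 else 0)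
    (i j : Fin n) (hj : m j = 1)
    (wi wj : V ≃ₗᵢ[ℝ] V)
    (hwiW : wi ∈ weylGroup R)
    (hwistab : (fun v => wi v) '' (insert (-θ) (Set.range Δ)) =
      insert (-θ) (Set.range Δ))
    (hwiθ : wi (-θ) = Δ i) (hwjθ : wj (-θ) = Δ j) :
    (wi * wj = 1 →
      wi (ϖ j) = -(ϖ i) ∧ ϖ j + ϖ i ∈ corootLattice R) ∧
    (∀ k, m k = 1 → ∀ wk : V ≃ₗᵢ[ℝ] V, wk ∈ weylGroup R →
      (fun v => wk v) '' (insert (-θ) (Set.range Δ)) = insert (-θ) (Set.range Δ) →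
      wk (-θ) = Δ k → wi * wj = wk →
      wi (ϖ j) = ϖ k - ϖ i ∧ ϖ i + ϖ j - ϖ k ∈ corootLattice R) := by
  have hΔspan := span_range_eq_top_of_span_eq_top hspan hbase
  have hθΔ : ∀ l, Δ l ≠ -θ := fun l =>
    hθsum ▸ ne_neg_sum_smul hΔind (fun i => Nat.cast_nonneg (m i)) l
  have hϖθ : ⟪ϖ j, θ⟫ = 1 := by rw [hθsum, coweight_inner_sum_smul hϖ, hj, Nat.cast_one]
  have hQ : ϖ j - wi (ϖ j) ∈ corootLattice R :=
    sub_apply_mem_corootLattice hrefl hwiW (exists_int_coweight_inner hbase hϖ j)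
  have hwij : wi (Δ j) = (wi * wj) (-θ) := by rw [← hwjθ]; rfl
  constructor
  · intro h1
    have heq : wi (ϖ j) = -ϖ i := by
      rw [apply_coweight_of_apply_simple_eq_neg hΔind hΔspan hϖ hθΔ hwistab
        hwiθ (by rw [hwij, h1]; rfl), hϖθ, neg_one_smul]
    rw [heq, sub_neg_eq_add] at hQ
    exact ⟨heq, hQ⟩
  · intro k _ wk _ _ hwkθ h2
    have heq : wi (ϖ j) = ϖ k - ϖ i := by
      rw [apply_coweight_of_apply_simple_eq hΔind hΔspan hϖ hθΔ hwistab
        hwiθ (by rw [hwij, h2, hwkθ]), hϖθ, one_smul]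
    rw [heq, sub_sub_eq_add_sub, add_comm] at hQ
    exact ⟨heq, hQ⟩

/-- Let `α_i, α_j` be special simple roots with associated elements
`w_i, w_j ∈ W_0` and fundamental coweights `λ_i∨, λ_j∨`. If `w_i w_j = 1` then
`w_i λ_j∨ = -λ_i∨`, hence `λ_j∨ ≡ -λ_i∨ mod Q∨`; if `w_i w_j = w_k` for a special
root `α_k`, then `w_i λ_j∨ = λ_k∨ - λ_i∨`, hence `λ_i∨ + λ_j∨ ≡ λ_k∨ mod Q∨`. -/
theorem special_weyl_composition
    (R : Finset V)
    (h0 : (0 : V) ∉ R)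
    (hspan : Submodule.span ℝ (R : Set V) = ⊤)
    (hneg : ∀ α ∈ R, -α ∈ R)
    (hint : ∀ α ∈ R, ∀ β ∈ R, ∃ z : ℤ, 2 * ⟪α, β⟫ / ⟪α, α⟫ = (z : ℝ))
    (hrefl : ∀ α ∈ R, ∀ β ∈ R, β - (2 * ⟪β, α⟫ / ⟪α, α⟫) • α ∈ R)
    (hirr : ∀ R₁ R₂ : Set V, (R : Set V) = R₁ ∪ R₂ →
      (∀ α ∈ R₁, ∀ β ∈ R₂, ⟪α, β⟫ = 0) → R₁ = ∅ ∨ R₂ = ∅)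
    (θ : V) (hθR : θ ∈ R) (hθ2 : ⟪θ, θ⟫ = 2)
    (hlong : ∀ α ∈ R, ⟪α, α⟫ ≤ ⟪θ, θ⟫)
    {n : ℕ} (Δ : Fin n → V)
    (hΔR : ∀ i, Δ i ∈ R)
    (hΔind : LinearIndependent ℝ Δ)
    (hbase : ∀ α ∈ R, α ∈ AddSubmonoid.closure (Set.range Δ) ∨
      -α ∈ AddSubmonoid.closure (Set.range Δ))
    (m : Fin n → ℕ) (hm : ∀ i, 1 ≤ m i)
    (hθsum : θ = ∑ i, (m i : ℝ) • Δ i)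
    (ϖ : Fin n → V)
    (hϖ : ∀ i j, ⟪ϖ i, Δ j⟫ = if i = j then 1 else 0)
    (i j : Fin n) (hi : m i = 1) (hj : m j = 1)
    (wi wj : V ≃ₗᵢ[ℝ] V)
    (hwiW : wi ∈ weylGroup R) (hwjW : wj ∈ weylGroup R)
    (hwistab : (fun v => wi v) '' (insert (-θ) (Set.range Δ)) =
      insert (-θ) (Set.range Δ))
    (hwjstab : (fun v => wj v) '' (insert (-θ) (Set.range Δ)) =
      insert (-θ) (Set.range Δ))
    (hwiθ : wi (-θ) = Δ i) (hwjθ : wj (-θ) = Δ j) :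
    (wi * wj = 1 →
      wi (ϖ j) = -(ϖ i) ∧ ϖ j + ϖ i ∈ corootLattice R) ∧
    (∀ k, m k = 1 → ∀ wk : V ≃ₗᵢ[ℝ] V, wk ∈ weylGroup R →
      (fun v => wk v) '' (insert (-θ) (Set.range Δ)) = insert (-θ) (Set.range Δ) →
      wk (-θ) = Δ k → wi * wj = wk →
      wi (ϖ j) = ϖ k - ϖ i ∧ ϖ i + ϖ j - ϖ k ∈ corootLattice R) :=
  special_weyl_composition_general R hspan hrefl θ Δ hΔind hbase m hθsum ϖ hϖ i j hj wi wj hwiW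
    hwistab hwiθ hwjθ
end

section
/- Suppose Z ≅ Λ_Z/Q∨ is cyclic of order k, where Q∨ ⊆ Λ_Z ⊆ P∨. There exists a skew-symmetric ℤ-bilinear form ω: Λ_Z × Λ_Z → 𝕋 with ω(α,μ) = (−1)^{⟨α,μ⟩} for all α ∈ Q∨, μ ∈ Λ_Z, if and only if k⟨λ,λ⟩ ∈ 2ℤ for a generator λ of Λ_Z/Q∨. -/
open scoped RealInnerProductSpace

/-- A level ℓ compatible commutator map on the lattice Λ (relative to the pairing B and
the coroot lattice Q): a bi-multiplicative, skew-symmetric map into the unit circle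
satisfying `ω(α,μ) = (-1)^(ℓ⟨α,μ⟩)` whenever α lies in Q. -/
def IsCommutatorForm {V : Type*} [AddCommGroup V] (B : V → V → ℝ) (Q Λ : Set V)
    (ℓ : ℕ) (ω : V → V → ℂ) : Prop :=
  (∀ a ∈ Λ, ∀ b ∈ Λ, ‖ω a b‖ = 1) ∧
  (∀ a ∈ Λ, ∀ b ∈ Λ, ∀ c ∈ Λ, ω (a + b) c = ω a c * ω b c) ∧
  (∀ a ∈ Λ, ∀ b ∈ Λ, ∀ c ∈ Λ, ω a (b + c) = ω a b * ω a c) ∧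
  (∀ a ∈ Λ, ∀ b ∈ Λ, ω a b * ω b a = 1) ∧
  (∀ a ∈ Λ, ω a a = 1) ∧
  (∀ α ∈ Q, α ∈ Λ → ∀ μ ∈ Λ, ∀ z : ℤ, B α μ = (z : ℝ) →
    ω α μ = (-1 : ℂ) ^ ((ℓ : ℤ) * z))

/-! The exponent `⟪a, b⟫ - J a * J b * ⟪l, l⟫`, where `a - J a • l ∈ Q∨`, is an integer on `Λ_Z`,
symmetric, and even on the diagonal, so `(-1)` raised to it is skew-symmetric. It is
bi-multiplicative because the indices `J` are additive modulo `k` and every multiple of `k⟪l, l⟫`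
is even; on `α ∈ Q∨` one has `k ∣ J α`, giving the compatibility. Conversely, for any commutator
map `ω(k • l, l) = ω(l, l)^k = 1`, while compatibility forces `ω(k • l, l) = (-1)^(k⟪l, l⟫)`. -/

open Complex

lemma neg_one_cpow_add (x y : ℂ) : (-1 : ℂ) ^ (x + y) = (-1) ^ x * (-1) ^ y :=
  cpow_add x y (by norm_num)

lemma norm_neg_one_cpow_ofReal (x : ℝ) : ‖(-1 : ℂ) ^ (x : ℂ)‖ = 1 := by
  simp [norm_cpow_of_ne_zero (show (-1 : ℂ) ≠ 0 by norm_num)]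

lemma neg_one_cpow_two_mul_intCast (n : ℤ) : (-1 : ℂ) ^ (2 * (n : ℂ)) = 1 := by
  rw [← Int.cast_two, ← Int.cast_mul, cpow_intCast, (even_two_mul n).neg_one_zpow]

lemma neg_one_cpow_add_two_mul_intCast (x : ℂ) (n : ℤ) :
    (-1 : ℂ) ^ (x + 2 * n) = (-1) ^ x := by
  rw [neg_one_cpow_add, neg_one_cpow_two_mul_intCast, mul_one]

lemma exists_intCast_mul_mul_eq_two_mul {k : ℕ} {x : ℝ} {z₀ : ℤ} (hz₀ : k * x = 2 * z₀)
    {j : ℤ} (hj : (k : ℤ) ∣ j) (t : ℤ) : ∃ n : ℤ, j * t * x = 2 * n := by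
  obtain ⟨m, rfl⟩ := hj
  exact ⟨m * t * z₀, by push_cast; linear_combination (m * t : ℝ) * hz₀⟩

namespace IsCommutatorForm

variable {V : Type*} [AddCommGroup V] {B : V → V → ℝ} {Q : Set V} {Λ : Submodule ℤ V} {ℓ : ℕ}
  {ω : V → V → ℂ}

lemma map_zero_left (hω : IsCommutatorForm B Q Λ ℓ ω) {b : V} (hb : b ∈ Λ) : ω 0 b = 1 := by
  obtain ⟨hnorm, hadd, -⟩ := hω
  have hne : ω 0 b ≠ 0 := norm_ne_zero_iff.1 (by rw [hnorm 0 Λ.zero_mem b hb]; exact one_ne_zero)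
  have h := hadd 0 Λ.zero_mem 0 Λ.zero_mem b hb
  rw [add_zero, eq_comm] at h
  exact (mul_eq_left₀ hne).1 h

lemma map_nsmul_left (hω : IsCommutatorForm B Q Λ ℓ ω) (n : ℕ) {a b : V} (ha : a ∈ Λ)
    (hb : b ∈ Λ) : ω (n • a) b = ω a b ^ n := by
  have h0 := hω.map_zero_left hb
  obtain ⟨-, hadd, -⟩ := hω
  induction n with
  | zero => rw [zero_smul, pow_zero, h0]
  | succ n ih => rw [succ_nsmul, hadd _ (Λ.nsmul_mem ha n) a ha b hb, ih, pow_succ]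

lemma even_of_zsmul_mem (hω : IsCommutatorForm B Q Λ 1 ω) {l : V} (hl : l ∈ Λ) {n : ℕ}
    (hnl : (n : ℤ) • l ∈ Q) {z : ℤ} (hz : B ((n : ℤ) • l) l = z) : Even z := by
  have hpow : ω ((n : ℤ) • l) l = 1 := by
    rw [natCast_zsmul, hω.map_nsmul_left n hl hl, hω.2.2.2.2.1 l hl, one_pow]
  obtain ⟨-, -, -, -, -, hcompat⟩ := hω
  have hsign := hcompat _ hnl (Λ.smul_mem _ hl) l hl z hz
  rw [hpow, Nat.cast_one, one_mul] at hsign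
  by_contra hodd
  rw [(Int.not_even_iff_odd.1 hodd).neg_one_zpow] at hsign
  norm_num at hsign

end IsCommutatorForm

section

variable {V : Type*} [AddCommGroup V] {Q Λ : Submodule ℤ V} {l : V} {J : V → ℤ}

lemma index_add_sub_smul_mem (hJ : ∀ a ∈ Λ, a - J a • l ∈ Q) {a b : V} (ha : a ∈ Λ)
    (hb : b ∈ Λ) : (J a + J b - J (a + b)) • l ∈ Q := by
  have h := Q.sub_mem (hJ _ (Λ.add_mem ha hb)) (Q.add_mem (hJ a ha) (hJ b hb))
  convert h using 1
  module

lemma index_smul_mem (hJ : ∀ a ∈ Λ, a - J a • l ∈ Q) {α : V} (hαQ : α ∈ Q) (hαΛ : α ∈ Λ) :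
    J α • l ∈ Q := by
  simpa using Q.sub_mem hαQ (hJ α hαΛ)

end

section

variable {V : Type*} [NormedAddCommGroup V] [InnerProductSpace ℝ V]

lemma real_inner_zsmul_left (n : ℤ) (a b : V) : ⟪n • a, b⟫ = n * ⟪a, b⟫ := by
  rw [← Int.cast_smul_eq_zsmul ℝ, real_inner_smul_left]

lemma real_inner_zsmul_right (n : ℤ) (a b : V) : ⟪a, n • b⟫ = n * ⟪a, b⟫ := by
  rw [← Int.cast_smul_eq_zsmul ℝ, real_inner_smul_right]

def twistedInner (l : V) (J : V → ℤ) (a b : V) : ℝ := ⟪a, b⟫ - J a * J b * ⟪l, l⟫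

variable {l : V} {J : V → ℤ}

lemma twistedInner_comm (a b : V) : twistedInner l J a b = twistedInner l J b a := by
  simp only [twistedInner, real_inner_comm]
  ring

lemma twistedInner_add_left (a b c : V) :
    twistedInner l J (a + b) c =
      twistedInner l J a c + twistedInner l J b c +
        ((J a + J b - J (a + b) : ℤ) : ℝ) * J c * ⟪l, l⟫ := by
  simp only [twistedInner, inner_add_left]
  push_cast
  ring

lemma twistedInner_add_right (a b c : V) :
    twistedInner l J a (b + c) =
      twistedInner l J a b + twistedInner l J a c +
        ((J b + J c - J (b + c) : ℤ) : ℝ) * J a * ⟪l, l⟫ := by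
  simp only [twistedInner_comm a, twistedInner_add_left]

lemma twistedInner_eq_inner_sub (a b : V) :
    twistedInner l J a b = ⟪a - J a • l, b⟫ + J a * ⟪b - J b • l, l⟫ := by
  simp only [twistedInner, inner_sub_left, real_inner_zsmul_left, real_inner_comm l b]
  ring

lemma twistedInner_self_eq_inner_sub (a : V) :
    twistedInner l J a a = ⟪a - J a • l, a - J a • l⟫ + 2 * (J a * ⟪a - J a • l, l⟫) := by
  simp only [twistedInner, inner_sub_left, inner_sub_right, real_inner_zsmul_left,
    real_inner_zsmul_right, real_inner_comm l a]
  ring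

variable {Q Λ : Submodule ℤ V}

lemma exists_twistedInner_eq_intCast (hpair : ∀ a ∈ Q, ∀ b ∈ Λ, ∃ z : ℤ, ⟪a, b⟫ = (z : ℝ))
    (hl : l ∈ Λ) (hJ : ∀ a ∈ Λ, a - J a • l ∈ Q) {a b : V} (ha : a ∈ Λ) (hb : b ∈ Λ) :
    ∃ z : ℤ, twistedInner l J a b = z := by
  obtain ⟨z₁, h₁⟩ := hpair _ (hJ a ha) b hb
  obtain ⟨z₂, h₂⟩ := hpair _ (hJ b hb) l hl
  exact ⟨z₁ + J a * z₂, by rw [twistedInner_eq_inner_sub, h₁, h₂]; push_cast; ring⟩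

lemma exists_twistedInner_self_eq_two_mul (hpair : ∀ a ∈ Q, ∀ b ∈ Λ, ∃ z : ℤ, ⟪a, b⟫ = (z : ℝ))
    (heven : ∀ a ∈ Q, ∃ z : ℤ, ⟪a, a⟫ = 2 * (z : ℝ)) (hl : l ∈ Λ)
    (hJ : ∀ a ∈ Λ, a - J a • l ∈ Q) {a : V} (ha : a ∈ Λ) :
    ∃ z : ℤ, twistedInner l J a a = 2 * z := by
  obtain ⟨z₁, h₁⟩ := heven _ (hJ a ha)
  obtain ⟨z₂, h₂⟩ := hpair _ (hJ a ha) l hl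
  exact ⟨z₁ + J a * z₂, by rw [twistedInner_self_eq_inner_sub, h₁, h₂]; push_cast; ring⟩

theorem isCommutatorForm_neg_one_cpow_twistedInner {k : ℕ} {z₀ : ℤ}
    (hpair : ∀ a ∈ Q, ∀ b ∈ Λ, ∃ z : ℤ, ⟪a, b⟫ = (z : ℝ))
    (heven : ∀ a ∈ Q, ∃ z : ℤ, ⟪a, a⟫ = 2 * (z : ℝ)) (hl : l ∈ Λ)
    (hJ : ∀ a ∈ Λ, a - J a • l ∈ Q) (horder : ∀ j : ℤ, j • l ∈ Q → (k : ℤ) ∣ j)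
    (hz₀ : k * ⟪l, l⟫ = 2 * z₀) :
    IsCommutatorForm (fun a b => ⟪a, b⟫) Q Λ 1
      (fun a b => (-1 : ℂ) ^ (twistedInner l J a b : ℂ)) := by
  have hdefect (j : ℤ) (hj : j • l ∈ Q) (t : ℤ) : ∃ n : ℤ, j * t * ⟪l, l⟫ = 2 * n :=
    exists_intCast_mul_mul_eq_two_mul hz₀ (horder j hj) t
  refine ⟨fun a _ b _ => norm_neg_one_cpow_ofReal _, ?_, ?_, ?_, ?_, ?_⟩
  · intro a ha b hb c hc
    obtain ⟨n, hn⟩ := hdefect _ (index_add_sub_smul_mem hJ ha hb) (J c)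
    simp only [twistedInner_add_left, hn]
    push_cast
    rw [neg_one_cpow_add_two_mul_intCast, neg_one_cpow_add]
  · intro a ha b hb c hc
    obtain ⟨n, hn⟩ := hdefect _ (index_add_sub_smul_mem hJ hb hc) (J a)
    simp only [twistedInner_add_right, hn]
    push_cast
    rw [neg_one_cpow_add_two_mul_intCast, neg_one_cpow_add]
  · intro a ha b hb
    obtain ⟨z, hz⟩ := exists_twistedInner_eq_intCast hpair hl hJ ha hb
    simp only [twistedInner_comm b a, ← neg_one_cpow_add, hz, ← two_mul]
    exact neg_one_cpow_two_mul_intCast z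
  · intro a ha
    obtain ⟨z, hz⟩ := exists_twistedInner_self_eq_two_mul hpair heven hl hJ ha
    simp only [hz]
    push_cast
    exact neg_one_cpow_two_mul_intCast z
  · intro α hαQ hαΛ μ _ z hz
    obtain ⟨n, hn⟩ := hdefect _ (index_smul_mem hJ hαQ hαΛ) (J μ)
    have hexp : (twistedInner l J α μ : ℂ) = z + 2 * ((-n : ℤ) : ℂ) := by
      simp only at hz
      rw [twistedInner, hz, hn]
      push_cast
      ring
    simp only [hexp]
    rw [neg_one_cpow_add_two_mul_intCast, cpow_intCast, Nat.cast_one, one_mul]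

end

theorem cyclic_commutator_form_exists_iff_general
    {V : Type*} [NormedAddCommGroup V] [InnerProductSpace ℝ V]
    (Qv Λ : Submodule ℤ V)
    (hpair : ∀ a ∈ Qv, ∀ b ∈ Λ, ∃ z : ℤ, ⟪a, b⟫ = (z : ℝ))
    (heven : ∀ a ∈ Qv, ∃ z : ℤ, ⟪a, a⟫ = 2 * (z : ℝ))
    (k : ℕ) (l : V) (hl : l ∈ Λ)
    (hgen : ∀ μ ∈ Λ, ∃ j : ℤ, μ - j • l ∈ Qv)
    (hkl : (k : ℤ) • l ∈ Qv)
    (horder : ∀ j : ℤ, j • l ∈ Qv → (k : ℤ) ∣ j) :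
    (∃ ω : V → V → ℂ,
        IsCommutatorForm (fun a b => ⟪a, b⟫) (Qv : Set V) (Λ : Set V) 1 ω) ↔
      ∃ z : ℤ, (k : ℝ) * ⟪l, l⟫ = 2 * (z : ℝ) := by
  constructor
  · rintro ⟨ω, hω⟩
    obtain ⟨z, hz⟩ := hpair _ hkl l hl
    obtain ⟨n, rfl⟩ := hω.even_of_zsmul_mem hl hkl hz
    rw [real_inner_zsmul_left] at hz
    push_cast at hz
    exact ⟨n, by linear_combination hz⟩
  · rintro ⟨z₀, hz₀⟩
    choose! J hJ using hgen
    exact ⟨_, isCommutatorForm_neg_one_cpow_twistedInner hpair heven hl hJ horder hz₀⟩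

/-- Suppose `Z ≅ Λ_Z/Q∨` is cyclic of order k, with `Q∨ ⊆ Λ_Z ⊆ P∨`.
There exists a skew-symmetric ℤ-bilinear form `ω : Λ_Z × Λ_Z → 𝕋` with
`ω(α,μ) = (-1)^⟨α,μ⟩` for all `α ∈ Q∨`, `μ ∈ Λ_Z`, if and only if `k⟨λ,λ⟩ ∈ 2ℤ`
for a generator λ of `Λ_Z/Q∨`. -/
theorem cyclic_commutator_form_exists_iff
    {V : Type*} [NormedAddCommGroup V] [InnerProductSpace ℝ V]
    (Qv Λ : Submodule ℤ V) (hQΛ : Qv ≤ Λ)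
    (hpair : ∀ a ∈ Qv, ∀ b ∈ Λ, ∃ z : ℤ, ⟪a, b⟫ = (z : ℝ))
    (heven : ∀ a ∈ Qv, ∃ z : ℤ, ⟪a, a⟫ = 2 * (z : ℝ))
    (k : ℕ) (hk : 1 ≤ k) (l : V) (hl : l ∈ Λ)
    (hgen : ∀ μ ∈ Λ, ∃ j : ℤ, μ - j • l ∈ Qv)
    (hkl : (k : ℤ) • l ∈ Qv)
    (horder : ∀ j : ℤ, j • l ∈ Qv → (k : ℤ) ∣ j) :
    (∃ ω : V → V → ℂ,
        IsCommutatorForm (fun a b => ⟪a, b⟫) (Qv : Set V) (Λ : Set V) 1 ω) ↔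
      ∃ z : ℤ, (k : ℝ) * ⟪l, l⟫ = 2 * (z : ℝ) :=
  cyclic_commutator_form_exists_iff_general Qv Λ hpair heven k l hl hgen hkl horder
end

section
/- For G = Spin_{4n} (so Z(G) ≅ ℤ₂ × ℤ₂), the action of the center on the level ℓ alcove of type D_{2n} has a fixed point only if ℓ is even. -/
/-! A fixed point of `A₁` satisfies `μ_m = -μ_m` and `μ₁ = ℓ - μ₁`, that is `μ_m = 0` and
`ℓ = 2 μ₁`. Since `0` is not a half-integer, `μ` has integer coordinates, so `ℓ = 2 μ₁` is even. -/

theorem eq_add_self_and_eq_zero_of_fixed {G ι : Type*} [AddCommGroup G] [IsAddTorsionFree G]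
    [DecidableEq ι] {a b : ι} (hab : a ≠ b) (c : G) {μ : ι → G}
    (hfix : (fun j => if j = a then c - μ j else if j = b then -μ j else μ j) = μ) :
    c = μ a + μ a ∧ μ b = 0 := by
  have ha := congrFun hfix a
  have hb := congrFun hfix b
  simp only [if_neg hab.symm] at ha hb
  exact ⟨sub_eq_iff_eq_add.mp ha, neg_eq_self.mp hb⟩

theorem Int.cast_add_half_ne_zero (z : ℤ) : (z : ℝ) + 1 / 2 ≠ 0 := by
  intro h
  have : ((2 * z + 1 : ℤ) : ℝ) = 0 := by push_cast; linarith
  have : 2 * z + 1 = 0 := by exact_mod_cast this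
  omega

theorem Nat.even_of_cast_eq_intCast_add_self {ℓ : ℕ} {z : ℤ} (h : (ℓ : ℝ) = z + z) : Even ℓ := by
  have : (ℓ : ℤ) = z + z := by exact_mod_cast h
  exact (Int.even_coe_nat ℓ).mp ⟨z, this⟩

/-- For `G = Spin_{4n}` (center ℤ₂ × ℤ₂), the action of the center on the
level ℓ alcove of type `D_{2n}` — generated by
`A₁(μ) = (ℓ-μ₁, μ₂, …, μ_{2n-1}, -μ_{2n})`, `A_{2n}(μ) = (ℓ/2-μ_{2n}, …, ℓ/2-μ₁)` and
`A_{2n-1} = A₁ ∘ A_{2n}` — has a fixed point only if ℓ is even. -/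
theorem spin4n_alcove_fixed_point_even (n : ℕ) (hn : 2 ≤ n) (ℓ : ℕ)
    (μ : Fin (2 * n) → ℝ)
    -- μ has integer or half-integer coordinates
    (hint : (∀ i, ∃ z : ℤ, μ i = (z : ℝ)) ∨ (∀ i, ∃ z : ℤ, μ i = (z : ℝ) + 1 / 2))
    -- μ is fixed by A₁
    (hfix1 : (fun j : Fin (2 * n) =>
        if j = (⟨0, by omega⟩ : Fin (2 * n)) then (ℓ : ℝ) - μ j
        else if j = (⟨2 * n - 1, by omega⟩ : Fin (2 * n)) then -μ j
        else μ j) = μ) :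
    Even ℓ := by
  have hne : (⟨0, by omega⟩ : Fin (2 * n)) ≠ ⟨2 * n - 1, by omega⟩ := by
    simp only [ne_eq, Fin.mk.injEq]; omega
  obtain ⟨hℓ, hlast⟩ := eq_add_self_and_eq_zero_of_fixed hne (ℓ : ℝ) hfix1
  rcases hint with hint | hhalf
  · obtain ⟨z, hz⟩ := hint ⟨0, by omega⟩
    exact Nat.even_of_cast_eq_intCast_add_self (hz ▸ hℓ)
  · obtain ⟨z, hz⟩ := hhalf ⟨2 * n - 1, by omega⟩
    exact absurd (hz ▸ hlast) (Int.cast_add_half_ne_zero z)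
end

section
/- If the basic level ℓ_b of G/Z divides ℓ, then the form ω(λ,μ) = (−1)^{ℓ⟨λ,μ⟩ + ℓ²⟨λ,λ⟩⟨μ,μ⟩} on the integral lattice Λ_Z of G/Z is a well-defined skew-symmetric bi-multiplicative 𝕋-valued form satisfying ω(α,μ) = (−1)^{ℓ⟨α,μ⟩} whenever α lies in the coroot lattice Q∨; in particular the fundamental level of G/Z divides its basic level. -/
open scoped RealInnerProductSpace

/-!
All the identities required of `ω = (-1)^e` with `e(λ,μ) = ℓ⟨λ,μ⟩ + ℓ²⟨λ,λ⟩⟨μ,μ⟩` hold because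
they hold for `e` modulo `2ℤ`: once `ℓ⟨·,·⟩` is integral on `Λ`, expanding `e` produces error
terms `2 (ℓ⟨·,·⟩)(ℓ⟨·,·⟩)`, the diagonal `e(λ,λ) = z + z²` is even, and for a coroot `α` the
even norm `⟨α,α⟩ = 2w` kills the quadratic term. Since the commutator conditions only see `ℓ`
modulo 2, the level `ℓ_b` form also works at level 1 or 2, whichever has the parity of `ℓ_b`.
-/

/-- `(-1) ^ x` for real `x`, via the branch `exp (π i x)`. -/
noncomputable def expPiI (x : ℝ) : ℂ := Complex.exp (Real.pi * Complex.I * x)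

lemma expPiI_add (x y : ℝ) : expPiI (x + y) = expPiI x * expPiI y := by
  simp only [expPiI, Complex.ofReal_add, mul_add, Complex.exp_add]

lemma expPiI_intCast (z : ℤ) : expPiI z = (-1) ^ z := by
  rw [expPiI, Complex.ofReal_intCast, mul_comm, Complex.exp_int_mul, Complex.exp_pi_mul_I]

lemma expPiI_two_mul_intCast (n : ℤ) : expPiI (2 * n) = 1 := by
  rw [← (even_two_mul n).neg_one_zpow, ← expPiI_intCast]
  push_cast
  rfl

lemma expPiI_add_two_mul_intCast (x : ℝ) (n : ℤ) : expPiI (x + 2 * n) = expPiI x := by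
  rw [expPiI_add, expPiI_two_mul_intCast, mul_one]

lemma norm_expPiI (x : ℝ) : ‖expPiI x‖ = 1 := by
  rw [expPiI, show (Real.pi : ℂ) * Complex.I * x = ((Real.pi * x : ℝ) : ℂ) * Complex.I by
    push_cast; ring]
  exact Complex.norm_exp_ofReal_mul_I _

lemma IsCommutatorForm.of_even_iff {V : Type*} [AddCommGroup V] {B : V → V → ℝ} {Q Λ : Set V}
    {m n : ℕ} {ω : V → V → ℂ} (h : IsCommutatorForm B Q Λ m ω) (hmn : Even m ↔ Even n) :
    IsCommutatorForm B Q Λ n ω := by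
  obtain ⟨hnorm, hleft, hright, hskew, hdiag, hcoroot⟩ := h
  refine ⟨hnorm, hleft, hright, hskew, hdiag, fun α hα hαΛ μ hμ z hz => ?_⟩
  rw [hcoroot α hα hαΛ μ hμ z hz, zpow_mul, zpow_mul, zpow_natCast, zpow_natCast,
    neg_one_pow_congr hmn]

section

variable {V : Type*} [NormedAddCommGroup V] [InnerProductSpace ℝ V]

def IsIntegralAtLevel (Λ : Set V) (ℓ : ℕ) : Prop :=
  ∀ a ∈ Λ, ∀ b ∈ Λ, ∃ z : ℤ, (ℓ : ℝ) * ⟪a, b⟫ = z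

lemma IsIntegralAtLevel.of_dvd {Λ : Set V} {m n : ℕ} (h : IsIntegralAtLevel Λ m) (hmn : m ∣ n) :
    IsIntegralAtLevel Λ n := by
  obtain ⟨k, rfl⟩ := hmn
  intro a ha b hb
  obtain ⟨z, hz⟩ := h a ha b hb
  exact ⟨k * z, by push_cast; linear_combination (k : ℝ) * hz⟩

def levelExponent (ℓ : ℕ) (a b : V) : ℝ := ℓ * ⟪a, b⟫ + (ℓ : ℝ) ^ 2 * ⟪a, a⟫ * ⟪b, b⟫

noncomputable def levelForm (ℓ : ℕ) (a b : V) : ℂ := expPiI (levelExponent ℓ a b)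

namespace IsIntegralAtLevel

variable {Λ : Set V} {ℓ : ℕ} {a b c : V}

lemma levelExponent_add_left (h : IsIntegralAtLevel Λ ℓ) (ha : a ∈ Λ) (hb : b ∈ Λ)
    (hc : c ∈ Λ) :
    ∃ n : ℤ, levelExponent ℓ (a + b) c = levelExponent ℓ a c + levelExponent ℓ b c + 2 * n := by
  obtain ⟨zab, hab⟩ := h a ha b hb
  obtain ⟨zcc, hcc⟩ := h c hc c hc
  refine ⟨zab * zcc, ?_⟩
  simp only [levelExponent, inner_add_left, inner_add_right]
  push_cast
  linear_combination (2 * ℓ * ⟪c, c⟫) * hab + (2 * zab : ℝ) * hcc +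
    ((ℓ : ℝ) ^ 2 * ⟪c, c⟫) * real_inner_comm a b

lemma levelExponent_add_right (h : IsIntegralAtLevel Λ ℓ) (ha : a ∈ Λ) (hb : b ∈ Λ)
    (hc : c ∈ Λ) :
    ∃ n : ℤ, levelExponent ℓ a (b + c) = levelExponent ℓ a b + levelExponent ℓ a c + 2 * n := by
  obtain ⟨zbc, hbc⟩ := h b hb c hc
  obtain ⟨zaa, haa⟩ := h a ha a ha
  refine ⟨zbc * zaa, ?_⟩
  simp only [levelExponent, inner_add_left, inner_add_right]
  push_cast
  linear_combination (2 * ℓ * ⟪a, a⟫) * hbc + (2 * zbc : ℝ) * haa +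
    ((ℓ : ℝ) ^ 2 * ⟪a, a⟫) * real_inner_comm b c

lemma levelExponent_add_swap (h : IsIntegralAtLevel Λ ℓ) (ha : a ∈ Λ) (hb : b ∈ Λ) :
    ∃ n : ℤ, levelExponent ℓ a b + levelExponent ℓ b a = 2 * n := by
  obtain ⟨zab, hab⟩ := h a ha b hb
  obtain ⟨zaa, haa⟩ := h a ha a ha
  obtain ⟨zbb, hbb⟩ := h b hb b hb
  refine ⟨zab + zaa * zbb, ?_⟩
  simp only [levelExponent]
  push_cast
  linear_combination 2 * hab + (2 * ℓ * ⟪b, b⟫) * haa + (2 * zaa : ℝ) * hbb +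
    (ℓ : ℝ) * real_inner_comm a b

lemma levelExponent_self (h : IsIntegralAtLevel Λ ℓ) (ha : a ∈ Λ) :
    ∃ n : ℤ, levelExponent ℓ a a = 2 * n := by
  obtain ⟨z, hz⟩ := h a ha a ha
  obtain ⟨n, hn⟩ := Int.even_mul_succ_self z
  refine ⟨n, ?_⟩
  have hn' : (z : ℝ) * (z + 1) = n + n := by exact_mod_cast hn
  simp only [levelExponent]
  linear_combination (1 + ℓ * ⟪a, a⟫ + z) * hz + hn'

lemma levelExponent_of_inner_self_eq_two_mul (h : IsIntegralAtLevel Λ ℓ) {α μ : V} {w z : ℤ}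
    (hα : ⟪α, α⟫ = 2 * w) (hμ : μ ∈ Λ) (hz : ⟪α, μ⟫ = z) :
    ∃ n : ℤ, levelExponent ℓ α μ = ((ℓ * z : ℤ) : ℝ) + 2 * n := by
  obtain ⟨m, hm⟩ := h μ hμ μ hμ
  refine ⟨ℓ * w * m, ?_⟩
  simp only [levelExponent, hα, hz]
  push_cast
  linear_combination (2 * ℓ * w : ℝ) * hm

theorem isCommutatorForm_levelForm {Q : Set V} (heven : ∀ a ∈ Q, ∃ w : ℤ, ⟪a, a⟫ = 2 * w)
    (h : IsIntegralAtLevel Λ ℓ) :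
    IsCommutatorForm (fun a b => ⟪a, b⟫) Q Λ ℓ (levelForm ℓ) := by
  refine ⟨fun a _ b _ => norm_expPiI _, fun a ha b hb c hc => ?_, fun a ha b hb c hc => ?_,
    fun a ha b hb => ?_, fun a ha => ?_, fun α hα _ μ hμ z hz => ?_⟩
  · obtain ⟨n, hn⟩ := h.levelExponent_add_left ha hb hc
    rw [levelForm, hn, expPiI_add_two_mul_intCast, expPiI_add, levelForm, levelForm]
  · obtain ⟨n, hn⟩ := h.levelExponent_add_right ha hb hc
    rw [levelForm, hn, expPiI_add_two_mul_intCast, expPiI_add, levelForm, levelForm]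
  · obtain ⟨n, hn⟩ := h.levelExponent_add_swap ha hb
    rw [levelForm, levelForm, ← expPiI_add, hn, expPiI_two_mul_intCast]
  · obtain ⟨n, hn⟩ := h.levelExponent_self ha
    rw [levelForm, hn, expPiI_two_mul_intCast]
  · obtain ⟨w, hw⟩ := heven α hα
    obtain ⟨n, hn⟩ := h.levelExponent_of_inner_self_eq_two_mul hw hμ hz
    rw [levelForm, hn, expPiI_add_two_mul_intCast, expPiI_intCast]

end IsIntegralAtLevel

end

theorem canonical_form_at_multiples_of_basic_level_general
    {V : Type*} [NormedAddCommGroup V] [InnerProductSpace ℝ V]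
    (Qv Λ : Submodule ℤ V)
    (heven : ∀ a ∈ Qv, ∃ z : ℤ, ⟪a, a⟫ = 2 * (z : ℝ))
    (ℓb : ℕ)
    (hb : IsLeast {ℓ : ℕ | 1 ≤ ℓ ∧ ∀ a ∈ Λ, ∀ b ∈ Λ,
      ∃ z : ℤ, (ℓ : ℝ) * ⟪a, b⟫ = (z : ℝ)} ℓb)
    (ℓ : ℕ) (hdvd : ℓb ∣ ℓ) :
    (∃ ω : V → V → ℂ,
      (∀ a ∈ Λ, ∀ b ∈ Λ, ∀ z : ℤ,
        (ℓ : ℝ) * ⟪a, b⟫ + (ℓ : ℝ) ^ 2 * ⟪a, a⟫ * ⟪b, b⟫ = (z : ℝ) →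
        ω a b = (-1 : ℂ) ^ z) ∧
      IsCommutatorForm (fun a b => ⟪a, b⟫) (Qv : Set V) (Λ : Set V) ℓ ω) ∧
    (∀ ℓf : ℕ,
      IsLeast {ℓ' : ℕ | 1 ≤ ℓ' ∧ ∃ ω : V → V → ℂ,
        IsCommutatorForm (fun a b => ⟪a, b⟫) (Qv : Set V) (Λ : Set V) ℓ' ω} ℓf →
      ℓf ∣ ℓb) := by
  have hintb : IsIntegralAtLevel (Λ : Set V) ℓb := hb.1.2
  refine ⟨⟨levelForm ℓ, fun a _ b _ z hz => (congrArg expPiI hz).trans (expPiI_intCast z),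
    (hintb.of_dvd hdvd).isCommutatorForm_levelForm heven⟩, fun ℓf hf => ?_⟩
  have hωb := hintb.isCommutatorForm_levelForm heven
  have hℓf : 1 ≤ ℓf := hf.1.1
  rcases Nat.even_or_odd ℓb with hℓb | hℓb
  · have : ℓf ≤ 2 := hf.2 ⟨one_le_two, _, hωb.of_even_iff (iff_of_true hℓb even_two)⟩
    interval_cases ℓf
    · exact one_dvd ℓb
    · exact even_iff_two_dvd.mp hℓb
  · have : ℓf ≤ 1 := hf.2 ⟨le_rfl, _, hωb.of_even_iff
      (iff_of_false (Nat.not_even_iff_odd.mpr hℓb) Nat.not_even_one)⟩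
    obtain rfl : ℓf = 1 := le_antisymm this hℓf
    exact one_dvd ℓb

/-- If the basic level `ℓ_b` of `G/Z` divides ℓ, then the form
`ω(λ,μ) = (-1)^(ℓ⟨λ,μ⟩ + ℓ²⟨λ,λ⟩⟨μ,μ⟩)` on the integral lattice `Λ_Z` of `G/Z` is a
well-defined skew-symmetric bi-multiplicative 𝕋-valued form satisfying
`ω(α,μ) = (-1)^(ℓ⟨α,μ⟩)` whenever α lies in the coroot lattice `Q∨`; in particular the
fundamental level of `G/Z` divides its basic level. -/
theorem canonical_form_at_multiples_of_basic_level
    {V : Type*} [NormedAddCommGroup V] [InnerProductSpace ℝ V]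
    (Qv Λ : Submodule ℤ V) (hQΛ : Qv ≤ Λ)
    (hpair : ∀ a ∈ Qv, ∀ b ∈ Λ, ∃ z : ℤ, ⟪a, b⟫ = (z : ℝ))
    (heven : ∀ a ∈ Qv, ∃ z : ℤ, ⟪a, a⟫ = 2 * (z : ℝ))
    (ℓb : ℕ)
    (hb : IsLeast {ℓ : ℕ | 1 ≤ ℓ ∧ ∀ a ∈ Λ, ∀ b ∈ Λ,
      ∃ z : ℤ, (ℓ : ℝ) * ⟪a, b⟫ = (z : ℝ)} ℓb)
    (ℓ : ℕ) (hdvd : ℓb ∣ ℓ) :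
    (∃ ω : V → V → ℂ,
      (∀ a ∈ Λ, ∀ b ∈ Λ, ∀ z : ℤ,
        (ℓ : ℝ) * ⟪a, b⟫ + (ℓ : ℝ) ^ 2 * ⟪a, a⟫ * ⟪b, b⟫ = (z : ℝ) →
        ω a b = (-1 : ℂ) ^ z) ∧
      IsCommutatorForm (fun a b => ⟪a, b⟫) (Qv : Set V) (Λ : Set V) ℓ ω) ∧
    (∀ ℓf : ℕ,
      IsLeast {ℓ' : ℕ | 1 ≤ ℓ' ∧ ∃ ω : V → V → ℂ,
        IsCommutatorForm (fun a b => ⟪a, b⟫) (Qv : Set V) (Λ : Set V) ℓ' ω} ℓf →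
      ℓf ∣ ℓb) :=
  canonical_form_at_multiples_of_basic_level_general Qv Λ heven ℓb hb ℓ hdvd
end
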